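/- arXiv:2003.14265 — 10 statements merged into one kernel-verified Lean document; each statement's English description precedes it below -/
import Mathlib

section
/- Let 0 < ε < 1 and let u = (u_0, …, u_m), v = (v_0, …, v_m), w = (w_0, …, w_m) be finite sequences of real numbers with u_i ≥ 0 for all i, satisfying: (1) (1-ε/8)·u_i ≤ v_i ≤ (1+ε/8)·u_i for every 0 ≤ i ≤ m; and (2) w_0 = v_0, and for every 1 ≤ i ≤ m, if (1-ε/2)·v_i ≤ w_{i-1} ≤ (1+ε/2)·v_i then w_i = w_{i-1}, and otherwise w_i = v_i. Then (1-ε)·u_i ≤ w_i ≤ (1+ε)·u_i for every 0 ≤ i ≤ m. -/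
/-- Lemma 3.2 (approximation part): if `v` is a pointwise `(1 ± ε/8)`-approximation of the
nonnegative sequence `u`, and `w` is the lazily rounded version of `v` (updated only when the
current output leaves a `(1 ± ε/2)`-window around `v`), then `w` is a `(1 ± ε)`-approximation
of `u`. -/
theorem stmt_0 (m : ℕ) (ε : ℝ) (u v w : ℕ → ℝ)
    (hε0 : 0 < ε) (hε1 : ε < 1)
    (hu : ∀ i ≤ m, 0 ≤ u i)
    (hv : ∀ i ≤ m, (1 - ε / 8) * u i ≤ v i ∧ v i ≤ (1 + ε / 8) * u i)
    (hw0 : w 0 = v 0)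
    (hw : ∀ i, 1 ≤ i → i ≤ m →
      ((((1 - ε / 2) * v i ≤ w (i - 1) ∧ w (i - 1) ≤ (1 + ε / 2) * v i) → w i = w (i - 1)) ∧
       (¬((1 - ε / 2) * v i ≤ w (i - 1) ∧ w (i - 1) ≤ (1 + ε / 2) * v i) → w i = v i))) :
    ∀ i ≤ m, (1 - ε) * u i ≤ w i ∧ w i ≤ (1 + ε) * u i := by
  have key : ∀ i ≤ m, (1 - ε / 2) * v i ≤ w i ∧ w i ≤ (1 + ε / 2) * v i := by
    intro i
    induction i with
    | zero =>
      intro _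
      have h1 := hv 0 (Nat.zero_le m)
      have h2 := hu 0 (Nat.zero_le m)
      rw [hw0]
      constructor <;> nlinarith
    | succ n ih =>
      intro h
      obtain ⟨h1, h2⟩ := hw (n + 1) (by omega) h
      simp only [Nat.add_sub_cancel] at h1 h2
      by_cases hc : (1 - ε / 2) * v (n + 1) ≤ w n ∧ w n ≤ (1 + ε / 2) * v (n + 1)
      · rw [h1 hc]; exact hc
      · rw [h2 hc]
        have h3 := hv (n + 1) h
        have h4 := hu (n + 1) h
        constructor <;> nlinarith
  intro i hi
  obtain ⟨k1, k2⟩ := key i hi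
  obtain ⟨h1, h2⟩ := hv i hi
  have h3 := hu i hi
  constructor <;> nlinarith
end

section
/- Let 0 < ε < 1 and let u = (u_0, …, u_m), v = (v_0, …, v_m), w = (w_0, …, w_m) be finite sequences of real numbers with u_i ≥ 0 for all i, satisfying: (1) (1-ε/8)·u_i ≤ v_i ≤ (1+ε/8)·u_i for every 0 ≤ i ≤ m; and (2) w_0 = v_0, and for every 1 ≤ i ≤ m, if (1-ε/2)·v_i ≤ w_{i-1} ≤ (1+ε/2)·v_i then w_i = w_{i-1}, and otherwise w_i = v_i. Let k - 1 be the number of indices i ∈ {1, …, m} with w_i ≠ w_{i-1}. Then there exist indices 0 = i_1 < i_2 < … < i_k ≤ m such that u_{i_{j-1}} ∉ [(1-ε/8)·u_{i_j}, (1+ε/8)·u_{i_j}] for every j = 2, …, k; in particular, the 0-flip number of w̄ is at most the (ε/8)-flip number of ū. -/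
/-!
Take the chain to be `0` followed by the positions where `w` jumps. If `a` is one of its entries
and `b` the next, then `w a = v a` and `w` keeps this value up to `b - 1`, so the jump at `b`
says that `v a` is not within a factor `1 ± ε/2` of `v b`. As `v` is within `1 ± ε/8` of `u`,
closeness of `u a` to `u b` within `1 ± ε/8` would force exactly that, so `u a` and `u b` flip.
-/

open Finset

def IsRelApprox (ε x y : ℝ) : Prop := (1 - ε) * y ≤ x ∧ x ≤ (1 + ε) * y

-- The upper bound comes down to `(1 + δ)² ≤ (1 + 4δ)(1 - δ)`, i.e. `5δ² ≤ δ`.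
theorem IsRelApprox.of_approx {δ x y p q : ℝ} (hδ0 : 0 ≤ δ) (hδ : δ ≤ 1 / 5) (hy : 0 ≤ y)
    (hp : IsRelApprox δ p x) (hq : IsRelApprox δ q y) (hxy : IsRelApprox δ x y) :
    IsRelApprox (4 * δ) p q := by
  obtain ⟨hp₁, hp₂⟩ := hp
  obtain ⟨hq₁, hq₂⟩ := hq
  obtain ⟨hxy₁, hxy₂⟩ := hxy
  constructor
  · calc (1 - 4 * δ) * q ≤ (1 - 4 * δ) * ((1 + δ) * y) := by gcongr; linarith
      _ ≤ (1 - δ) * ((1 - δ) * y) := by nlinarith [mul_nonneg (mul_nonneg hδ0 hδ0) hy]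
      _ ≤ (1 - δ) * x := by gcongr; linarith
      _ ≤ p := hp₁
  · calc p ≤ (1 + δ) * x := hp₂
      _ ≤ (1 + δ) * ((1 + δ) * y) := by gcongr
      _ ≤ (1 + 4 * δ) * ((1 - δ) * y) := by
        nlinarith [mul_nonneg (mul_nonneg hδ0 (by linarith : 0 ≤ 1 - 5 * δ)) hy]
      _ ≤ (1 + 4 * δ) * q := by gcongr

section Jumps

variable {α : Type*} (w : ℕ → α)

def IsNextJump (a b : ℕ) : Prop :=
  (a = 0 ∨ w a ≠ w (a - 1)) ∧ a < b ∧ (∀ j, a ≤ j → j < b → w j = w a) ∧ w b ≠ w (b - 1)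

theorem card_jumps_succ [DecidableEq α] (m : ℕ) :
    #{i ∈ Icc 1 (m + 1) | w i ≠ w (i - 1)} =
      #{i ∈ Icc 1 m | w i ≠ w (i - 1)} + if w (m + 1) = w m then 0 else 1 := by
  rw [← insert_Icc_right_eq_Icc_add_one (by omega), filter_insert, Nat.add_sub_cancel]
  by_cases hstay : w (m + 1) = w m <;> simp [hstay]

theorem exists_jump_chain [DecidableEq α] (m : ℕ) :
    ∃ l : List ℕ, ∃ a, l.length = #{i ∈ Icc 1 m | w i ≠ w (i - 1)} + 1 ∧ l.head? = some 0 ∧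
      (∀ x ∈ l, x ≤ m) ∧ l.IsChain (IsNextJump w) ∧ l.getLast? = some a ∧
      (a = 0 ∨ w a ≠ w (a - 1)) ∧ ∀ j, a ≤ j → j ≤ m → w j = w a := by
  induction m with
  | zero =>
    refine ⟨[0], 0, by simp, rfl, by simp, .singleton _, rfl, .inl rfl, ?_⟩
    intro j _ hj
    rw [Nat.le_zero.1 hj]
  | succ m ih =>
    obtain ⟨l, a, hlen, hhead, hle, hchain, hlast, ha, hconst⟩ := ih
    have ham : a ≤ m := hle a (List.mem_of_mem_getLast? hlast)
    by_cases hstay : w (m + 1) = w m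
    · refine ⟨l, a, by simp [card_jumps_succ, hstay, hlen], hhead,
        fun x hx => Nat.le_succ_of_le (hle x hx), hchain, hlast, ha, fun j haj hj => ?_⟩
      rcases hj.lt_or_eq with hj | rfl
      · exact hconst j haj (Nat.le_of_lt_succ hj)
      · exact hstay.trans (hconst m ham le_rfl)
    · have hjump : IsNextJump w a (m + 1) :=
        ⟨ha, Nat.lt_succ_of_le ham, fun j haj hj => hconst j haj (Nat.le_of_lt_succ hj), hstay⟩
      refine ⟨l ++ [m + 1], m + 1, by simp [card_jumps_succ, hstay, hlen], ?_, ?_,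
        hchain.append (.singleton _) ?_, List.getLast?_concat, .inr hstay, ?_⟩
      · rw [List.head?_append, hhead]; rfl
      · simp only [List.mem_append, List.mem_singleton]
        rintro x (hx | rfl)
        · exact Nat.le_succ_of_le (hle x hx)
        · exact le_rfl
      · simpa [hlast] using hjump
      · intro j hj hj'
        rw [le_antisymm hj' hj]

end Jumps

theorem not_isRelApprox_of_isNextJump {m : ℕ} {ε : ℝ} {u v w : ℕ → ℝ}
    (hε0 : 0 < ε) (hε1 : ε < 1) (hu : ∀ i ≤ m, 0 ≤ u i)
    (hv : ∀ i ≤ m, IsRelApprox (ε / 8) (v i) (u i)) (hw0 : w 0 = v 0)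
    (hw : ∀ i, 1 ≤ i → i ≤ m →
      (IsRelApprox (ε / 2) (w (i - 1)) (v i) → w i = w (i - 1)) ∧
        (¬IsRelApprox (ε / 2) (w (i - 1)) (v i) → w i = v i))
    {a b : ℕ} (hbm : b ≤ m) (hab : IsNextJump w a b) :
    ¬IsRelApprox (ε / 8) (u a) (u b) := by
  obtain ⟨ha, hab, hconst, hjump⟩ := hab
  have hwa : w a = v a := by
    rcases ha with rfl | ha
    · exact hw0
    · have : a ≠ 0 := by rintro rfl; exact ha rfl
      exact (hw a (by omega) (by omega)).2 fun h => ha ((hw a (by omega) (by omega)).1 h)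
  have hfar : ¬IsRelApprox (ε / 2) (v a) (v b) := by
    rw [← hwa, ← hconst (b - 1) (by omega) (by omega)]
    exact fun h => hjump ((hw b (by omega) hbm).1 h)
  intro hclose
  apply hfar
  rw [show ε / 2 = 4 * (ε / 8) by ring]
  exact IsRelApprox.of_approx (by positivity) (by linarith) (hu b hbm) (hv a (by omega))
    (hv b hbm) hclose

/-- Lemma 3.2 (flip-number part): if `v` is a pointwise `(1 ± ε/8)`-approximation of the
nonnegative sequence `u`, and `w` is the lazily rounded version of `v`, then, writing `k - 1`
for the number of indices `i ∈ {1, …, m}` with `w i ≠ w (i-1)`, there is a strictly increasing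
list of indices `0 = i₁ < i₂ < ⋯ < i_k ≤ m` such that consecutive values of `u` along this list
flip, i.e. `u (i_{j-1}) ∉ [(1 - ε/8)·u (i_j), (1 + ε/8)·u (i_j)]`; in particular the `0`-flip
number of `w` is at most the `(ε/8)`-flip number of `u`. -/
theorem stmt_1 (m : ℕ) (ε : ℝ) (u v w : ℕ → ℝ)
    (hε0 : 0 < ε) (hε1 : ε < 1)
    (hu : ∀ i ≤ m, 0 ≤ u i)
    (hv : ∀ i ≤ m, (1 - ε / 8) * u i ≤ v i ∧ v i ≤ (1 + ε / 8) * u i)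
    (hw0 : w 0 = v 0)
    (hw : ∀ i, 1 ≤ i → i ≤ m →
      ((((1 - ε / 2) * v i ≤ w (i - 1) ∧ w (i - 1) ≤ (1 + ε / 2) * v i) → w i = w (i - 1)) ∧
       (¬((1 - ε / 2) * v i ≤ w (i - 1) ∧ w (i - 1) ≤ (1 + ε / 2) * v i) → w i = v i))) :
    ∃ l : List ℕ,
      l.length = ((Finset.Icc 1 m).filter (fun i => w i ≠ w (i - 1))).card + 1 ∧
      l.head? = some 0 ∧
      l.Chain' (· < ·) ∧
      (∀ x ∈ l, x ≤ m) ∧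
      l.Chain' (fun a b => ¬((1 - ε / 8) * u b ≤ u a ∧ u a ≤ (1 + ε / 8) * u b)) := by
  obtain ⟨l, -, hlen, hhead, hle, hchain, -⟩ := exists_jump_chain w m
  refine ⟨l, hlen, hhead, hchain.imp fun _ _ hab => hab.2.1, hle, ?_⟩
  exact hchain.imp_of_mem_imp fun _ b _ hb hab =>
    not_isRelApprox_of_isNextJump hε0 hε1 hu hv hw0 hw (hle b hb) hab
end

section
/- Let 0 < ε < 1, T > 1, M ≥ 1, and let g : ℝ^n → ℝ be monotone, i.e., g(x) ≤ g(y) whenever x_i ≤ y_i for every coordinate i. Assume g(0) ≥ 0, that g(x) ≥ 1/T for every nonzero vector x with 0 ≤ x_i ≤ M for all i, and that g(M·𝟙) ≤ T, where 𝟙 is the all-ones vector. Let f^{(0)} = 0 and let f^{(0)}, f^{(1)}, …, f^{(m)} ∈ ℝ^n satisfy 0 ≤ f^{(t)}_i ≤ M for all t, i, with f^{(t)}_i nondecreasing in t for every fixed i (an insertion-only stream). Then every ε-flip chain in the sequence (g(f^{(0)}), g(f^{(1)}), …, g(f^{(m)})) has length at most 2 + 2·ln(T)/ε. -/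
/-!
Along an insertion-only stream the values `g (f t)` are nondecreasing in `t`, so consecutive
elements `a < b` of an `ε`-flip chain satisfy `g (f a) < (1 - ε) * g (f b)`. Every value after
the first one therefore exceeds `g 0`, is attained at a nonzero vector, and lies in `[1/T, T]`.
A chain of values in `[1/T, T]` growing by the factor `1 / (1 - ε)` at each step has at most
`1 + log (T ^ 2) / ε` elements, because `log (1 - ε) ≤ -ε`.
-/

theorem List.IsChain.and {α : Type*} {R S : α → α → Prop} :
    ∀ {l : List α}, l.IsChain R → l.IsChain S → l.IsChain (fun a b => R a b ∧ S a b)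
  | [], _, _ => .nil
  | [_], _, _ => .singleton _
  | _ :: _ :: _, hR, hS => by
    rw [List.isChain_cons_cons] at hR hS ⊢
    exact ⟨⟨hR.1, hS.1⟩, hR.2.and hS.2⟩

theorem List.IsChain.head_le_pow_mul_getLast {c : ℝ} (hc : 0 ≤ c) :
    ∀ {l : List ℝ}, l.IsChain (fun x y => x ≤ c * y) → ∀ (hne : l ≠ []),
      l.head hne ≤ c ^ (l.length - 1) * l.getLast hne
  | [x], _, _ => by simp
  | x :: y :: l, hl, _ => by
    rw [List.isChain_cons_cons] at hl
    have ih := hl.2.head_le_pow_mul_getLast hc (List.cons_ne_nil y l)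
    simp only [List.head_cons, List.length_cons, List.getLast_cons_cons,
      Nat.add_sub_cancel] at ih ⊢
    calc x ≤ c * y := hl.1
      _ ≤ c * (c ^ l.length * (y :: l).getLast (List.cons_ne_nil y l)) := by gcongr
      _ = c ^ (l.length + 1) * (y :: l).getLast (List.cons_ne_nil y l) := by ring

theorem List.IsChain.lt_of_mem_of_lt_mul {c x : ℝ} {l : List ℝ} (hc0 : 0 ≤ c) (hc1 : c ≤ 1)
    (hx : 0 ≤ x) (hl : (x :: l).IsChain (fun y z => y < c * z)) : ∀ y ∈ l, x < y := by
  have lt_of_lt_mul {y z : ℝ} (hy : 0 ≤ y) (h : y < c * z) : y < z := by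
    have : 0 < z := pos_of_mul_pos_right (hy.trans_lt h) hc0
    nlinarith
  rw [List.isChain_cons] at hl
  refine hl.2.induction _ _ (fun y z hyz hxy => (lt_of_lt_mul (hx.trans hxy.le) hyz).trans' hxy) ?_
  intro hne
  exact lt_of_lt_mul hx (hl.1 _ (List.head?_eq_some_head hne))

theorem mul_le_log_div_of_le_one_sub_pow_mul {ε a b : ℝ} {k : ℕ} (hε1 : ε < 1)
    (ha : 0 < a) (h : a ≤ (1 - ε) ^ k * b) : k * ε ≤ Real.log (b / a) := by
  have hpow : 0 < (1 - ε) ^ k := pow_pos (by linarith) k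
  have hb : 0 < b := pos_of_mul_pos_right (ha.trans_le h) hpow.le
  have hlog := Real.log_le_log ha h
  rw [Real.log_mul hpow.ne' hb.ne', Real.log_pow] at hlog
  have := Real.log_le_sub_one_of_pos (by linarith : 0 < 1 - ε)
  rw [Real.log_div hb.ne' ha.ne']
  nlinarith [(k.cast_nonneg : (0 : ℝ) ≤ k)]

theorem List.IsChain.length_sub_one_mul_le_log_div {ε a b : ℝ} {l : List ℝ} (hε1 : ε < 1)
    (ha : 0 < a) (hl : l.IsChain (fun x y => x ≤ (1 - ε) * y)) (hne : l ≠ [])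
    (hmem : ∀ x ∈ l, a ≤ x ∧ x ≤ b) : ((l.length : ℝ) - 1) * ε ≤ Real.log (b / a) := by
  have hbound : a ≤ (1 - ε) ^ (l.length - 1) * b :=
    calc a ≤ l.head hne := (hmem _ (List.head_mem hne)).1
      _ ≤ (1 - ε) ^ (l.length - 1) * l.getLast hne :=
        hl.head_le_pow_mul_getLast (by linarith) hne
      _ ≤ (1 - ε) ^ (l.length - 1) * b := by
        gcongr
        exact (hmem _ (List.getLast_mem hne)).2
  have hlen : 1 ≤ l.length := List.length_pos_iff.mpr hne
  simpa [Nat.cast_sub hlen] using mul_le_log_div_of_le_one_sub_pow_mul hε1 ha hbound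

theorem List.IsChain.length_le_two_add_log_div {ε a b c : ℝ} {l : List ℝ} (hε0 : 0 < ε)
    (hε1 : ε < 1) (hc : 0 ≤ c) (ha : 0 < a) (hab : a ≤ b)
    (hl : l.IsChain (fun x y => x < (1 - ε) * y)) (hbd : ∀ x ∈ l, c ≤ x ∧ x ≤ b)
    (hgap : ∀ x ∈ l, c < x → a ≤ x) : (l.length : ℝ) ≤ 2 + Real.log (b / a) / ε := by
  have hlog : 0 ≤ Real.log (b / a) / ε :=
    div_nonneg (Real.log_nonneg ((one_le_div ha).mpr hab)) hε0.le
  obtain _ | ⟨x, l'⟩ := l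
  · simp only [List.length_nil, CharP.cast_eq_zero]
    linarith
  have hx : c ≤ x := (hbd x List.mem_cons_self).1
  have hgt := hl.lt_of_mem_of_lt_mul (by linarith) (by linarith) (hc.trans hx)
  obtain rfl | hne := eq_or_ne l' []
  · simp only [List.length_singleton, Nat.cast_one]
    linarith
  have hmem : ∀ y ∈ l', a ≤ y ∧ y ≤ b := fun y hy =>
    ⟨hgap y (List.mem_cons_of_mem _ hy) (hx.trans_lt (hgt y hy)),
      (hbd y (List.mem_cons_of_mem _ hy)).2⟩
  have hbound := (hl.tail.imp fun _ _ h => h.le).length_sub_one_mul_le_log_div hε1 ha hne hmem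
  have : (l'.length : ℝ) - 1 ≤ Real.log (b / a) / ε := by rwa [le_div_iff₀ hε0]
  rw [List.length_cons, Nat.cast_succ]
  linarith

theorem lt_one_sub_mul_of_not_mem_window {ε x y : ℝ} (hε : 0 ≤ ε) (hxy : x ≤ y) (hy : 0 ≤ y)
    (h : ¬((1 - ε) * y ≤ x ∧ x ≤ (1 + ε) * y)) : x < (1 - ε) * y := by
  by_contra! hge
  exact h ⟨hge, hxy.trans (le_mul_of_one_le_left hy (by linarith))⟩

theorem stmt_2_general (n m : ℕ) (ε T M : ℝ) (g : (Fin n → ℝ) → ℝ) (f : ℕ → Fin n → ℝ)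
    (hε0 : 0 < ε) (hε1 : ε < 1) (hT : 1 < T)
    (hmono : ∀ x y : Fin n → ℝ, (∀ i, x i ≤ y i) → g x ≤ g y)
    (hg0 : 0 ≤ g 0)
    (hglb : ∀ x : Fin n → ℝ, x ≠ 0 → (∀ i, 0 ≤ x i ∧ x i ≤ M) → 1 / T ≤ g x)
    (hgub : g (fun _ => M) ≤ T)
    (hfbd : ∀ t ≤ m, ∀ i, 0 ≤ f t i ∧ f t i ≤ M)
    (hfmono : ∀ s t, s ≤ t → t ≤ m → ∀ i, f s i ≤ f t i) :
    ∀ l : List ℕ, l.Chain' (· < ·) → (∀ x ∈ l, x ≤ m) →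
      l.Chain' (fun a b =>
        ¬((1 - ε) * g (f b) ≤ g (f a) ∧ g (f a) ≤ (1 + ε) * g (f b))) →
      (l.length : ℝ) ≤ 2 + 2 * Real.log T / ε := by
  intro l hlt hle hflip
  have hv_ge : ∀ t ≤ m, g 0 ≤ g (f t) := fun t ht => hmono _ _ fun i => (hfbd t ht i).1
  have hv_le : ∀ t ≤ m, g (f t) ≤ T := fun t ht =>
    (hmono _ _ fun i => (hfbd t ht i).2).trans hgub
  have hv_gap : ∀ t ≤ m, g 0 < g (f t) → 1 / T ≤ g (f t) := fun t ht hlt =>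
    hglb _ (fun h0 => hlt.ne (by rw [h0])) (hfbd t ht)
  have hgrow : (l.map fun t => g (f t)).IsChain (fun x y => x < (1 - ε) * y) :=
    (List.isChain_map _).2 <| (List.IsChain.and hlt hflip).imp_of_mem_imp
      fun a b _ hb ⟨hab, hflip_ab⟩ => lt_one_sub_mul_of_not_mem_window hε0.le
        (hmono _ _ (hfmono a b hab.le (hle b hb))) (hg0.trans (hv_ge b (hle b hb))) hflip_ab
  have hlog : Real.log (T / (1 / T)) = 2 * Real.log T := by
    rw [one_div, div_inv_eq_mul, Real.log_mul (by positivity) (by positivity)]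
    ring
  have := hgrow.length_le_two_add_log_div hε0 hε1 hg0 (by positivity)
    (((div_le_one (by positivity)).mpr hT.le).trans hT.le)
    (List.forall_mem_map.2 fun t ht => ⟨hv_ge t (hle t ht), hv_le t (hle t ht)⟩)
    (List.forall_mem_map.2 fun t ht => hv_gap t (hle t ht))
  rwa [hlog, List.length_map] at this

/-- Proposition 3.4: a monotone function `g` whose value is at least `1/T` on nonzero vectors
(with coordinates in `[0, M]`) and at most `T` on the all-`M` vector has `ε`-flip number at most
`2 + 2·ln T / ε` on insertion-only streams: every `ε`-flip chain (a strictly increasing list of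
time steps `≤ m` along which consecutive values of `g` leave the `(1 ± ε)`-window) has length at
most `2 + 2·ln T / ε`. -/
theorem stmt_2 (n m : ℕ) (ε T M : ℝ) (g : (Fin n → ℝ) → ℝ) (f : ℕ → Fin n → ℝ)
    (hε0 : 0 < ε) (hε1 : ε < 1) (hT : 1 < T) (hM : 1 ≤ M)
    (hmono : ∀ x y : Fin n → ℝ, (∀ i, x i ≤ y i) → g x ≤ g y)
    (hg0 : 0 ≤ g 0)
    (hglb : ∀ x : Fin n → ℝ, x ≠ 0 → (∀ i, 0 ≤ x i ∧ x i ≤ M) → 1 / T ≤ g x)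
    (hgub : g (fun _ => M) ≤ T)
    (hf0 : f 0 = 0)
    (hfbd : ∀ t ≤ m, ∀ i, 0 ≤ f t i ∧ f t i ≤ M)
    (hfmono : ∀ s t, s ≤ t → t ≤ m → ∀ i, f s i ≤ f t i) :
    ∀ l : List ℕ, l.Chain' (· < ·) → (∀ x ∈ l, x ≤ m) →
      l.Chain' (fun a b =>
        ¬((1 - ε) * g (f b) ≤ g (f a) ∧ g (f a) ≤ (1 + ε) * g (f b))) →
      (l.length : ℝ) ≤ 2 + 2 * Real.log T / ε :=
  stmt_2_general n m ε T M g f hε0 hε1 hT hmono hg0 hglb hgub hfbd hfmono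
end

section
/- Let p > 0, 0 < ε < 1, M ≥ 1. Let f^{(0)} = 0 and let f^{(0)}, f^{(1)}, …, f^{(m)} be vectors of nonnegative integers in {0, 1, …, ⌊M⌋}^n with f^{(t)}_i nondecreasing in t for every fixed i (an insertion-only stream). Then every ε-flip chain in the sequence (‖f^{(0)}‖_p^p, ‖f^{(1)}‖_p^p, …, ‖f^{(m)}‖_p^p) has length at most 2 + (ln n + p·ln M)/ε. -/
/-!
Along an insertion-only stream the moment `F_p` is nondecreasing, so an `ε`-flip between two
times of a chain can only be a jump: `F_p` at the later time exceeds the earlier value by a factor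
more than `1 / (1 - ε)`. A nonzero moment of an integer vector is at least `1` and every moment is
at most `n M^p`, so after the first (possibly zero) value there are at most
`log (n M^p) / (-log (1 - ε)) ≤ (ln n + p ln M) / ε` such jumps.
-/

open Finset

theorem List.IsChain.le_pow_length_mul_getLast {α R : Type*} [CommSemiring R] [PartialOrder R]
    [IsOrderedRing R] {F : α → R} {c : R} (hc : 0 ≤ c) {a : α} {l : List α}
    (h : (a :: l).IsChain fun x y => F x ≤ c * F y) :
    F a ≤ c ^ l.length * F ((a :: l).getLast (List.cons_ne_nil a l)) := by
  induction l generalizing a with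
  | nil => simp
  | cons b t ih =>
    rw [List.isChain_cons_cons] at h
    calc F a ≤ c * F b := h.1
      _ ≤ c * (c ^ t.length * F ((b :: t).getLast (List.cons_ne_nil b t))) :=
          mul_le_mul_of_nonneg_left (ih h.2) hc
      _ = c ^ (b :: t).length * F ((a :: b :: t).getLast (List.cons_ne_nil a (b :: t))) := by
          rw [List.getLast_cons_cons, List.length_cons, pow_succ]; ring

theorem nat_mul_le_log_of_one_le_pow_mul {ε B : ℝ} {k : ℕ} (hε : ε < 1)
    (h : 1 ≤ (1 - ε) ^ k * B) : k * ε ≤ Real.log B := by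
  have hc : 0 < 1 - ε := by linarith
  have hB : 0 < B := pos_of_mul_pos_right (one_pos.trans_le h) (by positivity)
  have hlog : 0 ≤ k * Real.log (1 - ε) + Real.log B := by
    simpa [Real.log_mul (pow_pos hc k).ne' hB.ne', Real.log_pow] using
      Real.log_le_log one_pos h
  nlinarith [Real.log_le_sub_one_of_pos hc, (Nat.cast_nonneg k : (0 : ℝ) ≤ k)]

theorem isChain_lt_one_sub_mul_of_isChain_flip {α : Type*} [LT α] {F : α → ℝ} {ε : ℝ}
    {l : List α} (hF : ∀ x ∈ l, 0 ≤ F x)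
    (hmono : ∀ x ∈ l, ∀ y ∈ l, x < y → F x ≤ F y) (hlt : l.IsChain (· < ·))
    (hflip : l.IsChain fun x y => ¬((1 - ε) * F y ≤ F x ∧ F x ≤ (1 + ε) * F y)) :
    l.IsChain fun x y => F x < (1 - ε) * F y := by
  refine List.isChain_iff_getElem.2 fun i hi => ?_
  have hxy := hmono _ (List.getElem_mem _) _ (List.getElem_mem _) (hlt.getElem i hi)
  have hy := hF _ (List.getElem_mem hi)
  by_contra hge
  exact hflip.getElem i hi ⟨not_lt.1 hge, by nlinarith⟩

theorem length_le_of_isChain_lt_one_sub_mul {α : Type*} {F : α → ℝ} {ε L : ℝ} {l : List α}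
    (hε0 : 0 < ε) (hε1 : ε < 1) (hL : 0 ≤ L) (hF0 : ∀ x ∈ l, 0 ≤ F x)
    (hF1 : ∀ x ∈ l, 0 < F x → 1 ≤ F x) (hlog : ∀ x ∈ l, Real.log (F x) ≤ L)
    (hl : l.IsChain fun x y => F x < (1 - ε) * F y) :
    (l.length : ℝ) ≤ 2 + L / ε := by
  have hLε : 0 ≤ L / ε := div_nonneg hL hε0.le
  match l, hl with
  | [], _ => simp only [List.length_nil, Nat.cast_zero]; linarith
  | [_], _ => simp only [List.length_singleton, Nat.cast_one]; linarith
  | a :: b :: t, hl =>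
    rw [List.isChain_cons_cons] at hl
    have hb : 1 ≤ F b := hF1 b (by simp) (by nlinarith [hF0 a (by simp)])
    have hgeom := List.IsChain.le_pow_length_mul_getLast (by linarith)
      (hl.2.imp fun x y hxy => hxy.le)
    have hjumps := nat_mul_le_log_of_one_le_pow_mul hε1 (hb.trans hgeom)
    have hlast := hlog _ (List.mem_cons_of_mem a (List.getLast_mem (List.cons_ne_nil b t)))
    have ht : (t.length : ℝ) ≤ L / ε := (le_div_iff₀ hε0).2 (hjumps.trans hlast)
    simp only [List.length_cons, Nat.cast_add, Nat.cast_one]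
    linarith

section FrequencyMoment

variable {ι : Type*} [Fintype ι]

noncomputable def frequencyMoment (p : ℝ) (v : ι → ℕ) : ℝ := ∑ i, (v i : ℝ) ^ p

theorem frequencyMoment_nonneg (p : ℝ) (v : ι → ℕ) : 0 ≤ frequencyMoment p v :=
  sum_nonneg fun _ _ => by positivity

theorem frequencyMoment_mono {p : ℝ} (hp : 0 ≤ p) {v w : ι → ℕ} (h : v ≤ w) :
    frequencyMoment p v ≤ frequencyMoment p w :=
  sum_le_sum fun i _ => Real.rpow_le_rpow (Nat.cast_nonneg _) (Nat.cast_le.2 (h i)) hp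

theorem one_le_frequencyMoment {p : ℝ} (hp : 0 < p) {v : ι → ℕ}
    (h : 0 < frequencyMoment p v) : 1 ≤ frequencyMoment p v := by
  unfold frequencyMoment at h ⊢
  obtain ⟨i, -, hi⟩ := exists_lt_of_sum_lt (by simpa using h : ∑ _ : ι, (0 : ℝ) < _)
  have hvi : v i ≠ 0 := by
    rintro h0
    simp [h0, Real.zero_rpow hp.ne'] at hi
  calc (1 : ℝ) ≤ (v i : ℝ) ^ p :=
        Real.one_le_rpow (by exact_mod_cast Nat.one_le_iff_ne_zero.2 hvi) hp.le
    _ ≤ ∑ j, (v j : ℝ) ^ p :=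
        single_le_sum (f := fun j => (v j : ℝ) ^ p) (fun _ _ => by positivity) (mem_univ i)

theorem frequencyMoment_le_card_mul {p M : ℝ} (hp : 0 ≤ p) (hM : 0 ≤ M) {v : ι → ℕ}
    (hv : ∀ i, v i ≤ ⌊M⌋₊) : frequencyMoment p v ≤ Fintype.card ι * M ^ p := by
  calc frequencyMoment p v ≤ ∑ _ : ι, M ^ p := sum_le_sum fun i _ =>
        Real.rpow_le_rpow (Nat.cast_nonneg _)
          ((Nat.cast_le.2 (hv i)).trans (Nat.floor_le hM)) hp
    _ = Fintype.card ι * M ^ p := by simp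

theorem log_frequencyMoment_le {p M : ℝ} (hp : 0 ≤ p) (hM : 1 ≤ M) {v : ι → ℕ}
    (hv : ∀ i, v i ≤ ⌊M⌋₊) :
    Real.log (frequencyMoment p v) ≤ Real.log (Fintype.card ι) + p * Real.log M := by
  have hRHS : 0 ≤ Real.log (Fintype.card ι) + p * Real.log M :=
    add_nonneg (Real.log_natCast_nonneg _) (mul_nonneg hp (Real.log_nonneg hM))
  rcases (frequencyMoment_nonneg p v).eq_or_lt with h0 | hpos
  · rwa [← h0, Real.log_zero]
  have hB := frequencyMoment_le_card_mul hp (by linarith) hv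
  have hcard : (Fintype.card ι : ℝ) ≠ 0 := by
    intro h
    rw [h, zero_mul] at hB
    linarith
  calc Real.log (frequencyMoment p v) ≤ Real.log (Fintype.card ι * M ^ p) :=
        Real.log_le_log hpos hB
    _ = Real.log (Fintype.card ι) + p * Real.log M := by
        rw [Real.log_mul hcard (by positivity), Real.log_rpow (by linarith)]

end FrequencyMoment

theorem stmt_3_general (n m : ℕ) (p ε M : ℝ) (f : ℕ → Fin n → ℕ)
    (hp : 0 < p) (hε0 : 0 < ε) (hε1 : ε < 1) (hM : 1 ≤ M)
    (hfbd : ∀ t ≤ m, ∀ i, f t i ≤ ⌊M⌋₊)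
    (hfmono : ∀ s t, s ≤ t → t ≤ m → ∀ i, f s i ≤ f t i) :
    ∀ l : List ℕ, l.Chain' (· < ·) → (∀ x ∈ l, x ≤ m) →
      l.Chain' (fun a b =>
        ¬((1 - ε) * (∑ i, ((f b i : ℝ)) ^ p) ≤ (∑ i, ((f a i : ℝ)) ^ p) ∧
          (∑ i, ((f a i : ℝ)) ^ p) ≤ (1 + ε) * (∑ i, ((f b i : ℝ)) ^ p))) →
      (l.length : ℝ) ≤ 2 + (Real.log n + p * Real.log M) / ε := by
  intro l hlt hle hflip
  have hmono : ∀ x ∈ l, ∀ y ∈ l, x < y →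
      frequencyMoment p (f x) ≤ frequencyMoment p (f y) := fun x _ y hy hxy =>
    frequencyMoment_mono hp.le (hfmono x y hxy.le (hle y hy))
  have hlog : ∀ x ∈ l, Real.log (frequencyMoment p (f x)) ≤ Real.log n + p * Real.log M :=
    fun x hx => by simpa using log_frequencyMoment_le hp.le hM (hfbd x (hle x hx))
  refine length_le_of_isChain_lt_one_sub_mul hε0 hε1
    (add_nonneg (Real.log_natCast_nonneg n) (mul_nonneg hp.le (Real.log_nonneg hM)))
    (fun x _ => frequencyMoment_nonneg p (f x)) (fun _ _ => one_le_frequencyMoment hp) hlog ?_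
  exact isChain_lt_one_sub_mul_of_isChain_flip
    (fun x _ => frequencyMoment_nonneg p (f x)) hmono hlt hflip

/-- Corollary 3.5 for `p > 0`: on an insertion-only stream of vectors of nonnegative integers
bounded by `⌊M⌋`, every `ε`-flip chain in the sequence of `F_p` moments
`t ↦ ‖f^{(t)}‖_p^p = ∑ i, (f^{(t)}_i)^p` has length at most `2 + (ln n + p·ln M)/ε`. -/
theorem stmt_3 (n m : ℕ) (p ε M : ℝ) (f : ℕ → Fin n → ℕ)
    (hp : 0 < p) (hε0 : 0 < ε) (hε1 : ε < 1) (hM : 1 ≤ M)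
    (hf0 : f 0 = 0)
    (hfbd : ∀ t ≤ m, ∀ i, f t i ≤ ⌊M⌋₊)
    (hfmono : ∀ s t, s ≤ t → t ≤ m → ∀ i, f s i ≤ f t i) :
    ∀ l : List ℕ, l.Chain' (· < ·) → (∀ x ∈ l, x ≤ m) →
      l.Chain' (fun a b =>
        ¬((1 - ε) * (∑ i, ((f b i : ℝ)) ^ p) ≤ (∑ i, ((f a i : ℝ)) ^ p) ∧
          (∑ i, ((f a i : ℝ)) ^ p) ≤ (1 + ε) * (∑ i, ((f b i : ℝ)) ^ p))) →
      (l.length : ℝ) ≤ 2 + (Real.log n + p * Real.log M) / ε :=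
  stmt_3_general n m p ε M f hp hε0 hε1 hM hfbd hfmono
end

section
/- Let 0 < ε < 1. Let f^{(0)} = 0 and let f^{(0)}, f^{(1)}, …, f^{(m)} be vectors of nonnegative integers in ℕ^n with f^{(t)}_i nondecreasing in t for every fixed i (an insertion-only stream). Then every ε-flip chain in the sequence (‖f^{(0)}‖_0, ‖f^{(1)}‖_0, …, ‖f^{(m)}‖_0), where ‖x‖_0 is the number of nonzero coordinates of x, has length at most 2 + ln(n)/ε. -/
/-!
Along an insertion-only stream `‖f^{(t)}‖₀` is nondecreasing, so a flip between consecutive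
entries of a chain can only be a drop below `(1 - ε)` times the next value. From the second entry
on, the values along a chain of length `k` therefore grow by a factor `1 / (1 - ε)` at each step;
the second one is a positive integer and the last one is at most `n`, so `(1 - ε)^(k - 2) n ≥ 1`,
and `1 - ε ≤ e^(-ε)` turns this into `(k - 2) ε ≤ ln n`.
-/

open Finset Real

theorem List.IsChain.imp_of_mem₂ {α : Type*} {R S T : α → α → Prop} {l : List α}
    (H : ∀ a b, a ∈ l → b ∈ l → R a b → S a b → T a b) (hR : l.IsChain R) (hS : l.IsChain S) :
    l.IsChain T := by
  rw [List.isChain_iff_getElem] at *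
  exact fun i hi => H _ _ (List.getElem_mem _) (List.getElem_mem _) (hR i hi) (hS i hi)

theorem List.IsChain.le_pow_length_mul_of_forall_mem_le {α : Type*} [Semiring α] [PartialOrder α]
    [IsOrderedRing α] {c B a : α} {l : List α} (hc : 0 ≤ c)
    (h : (a :: l).IsChain (fun x y => x ≤ c * y)) (hB : ∀ x ∈ a :: l, x ≤ B) :
    a ≤ c ^ l.length * B := by
  induction l generalizing a with
  | nil => simpa using hB a List.mem_cons_self
  | cons b l ih =>
    obtain ⟨hab, hbl⟩ := List.isChain_cons_cons.1 h
    calc a ≤ c * b := hab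
      _ ≤ c * (c ^ l.length * B) :=
        mul_le_mul_of_nonneg_left (ih hbl fun x hx => hB x (List.mem_cons_of_mem a hx)) hc
      _ = c ^ (b :: l).length * B := by rw [List.length_cons, pow_succ', mul_assoc]

theorem Real.nat_mul_le_log_of_one_le_one_sub_pow_mul {ε N : ℝ} (hε : ε ≤ 1) {k : ℕ}
    (h : 1 ≤ (1 - ε) ^ k * N) : k * ε ≤ log N := by
  have hpow : (1 - ε) ^ k ≤ exp (-(k * ε)) := by
    rw [neg_mul_eq_mul_neg, exp_nat_mul]
    exact pow_le_pow_left₀ (by linarith) (one_sub_le_exp_neg ε) k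
  have hN : 0 < N := by
    by_contra! hN
    nlinarith [pow_nonneg (sub_nonneg.2 hε) k]
  rw [le_log_iff_exp_le hN]
  calc exp (k * ε) = exp (k * ε) * 1 := (mul_one _).symm
    _ ≤ exp (k * ε) * ((1 - ε) ^ k * N) := by gcongr
    _ ≤ exp (k * ε) * (exp (-(k * ε)) * N) := by gcongr
    _ = N := by rw [← mul_assoc, ← exp_add, add_neg_cancel, exp_zero, one_mul]

theorem length_le_two_add_log_div_of_isChain_lt_one_sub_mul {ε : ℝ} (hε0 : 0 < ε) (hε1 : ε ≤ 1)
    {N : ℕ} {l : List ℕ} (hl : l.IsChain (fun a b : ℕ => (a : ℝ) < (1 - ε) * b))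
    (hN : ∀ x ∈ l, x ≤ N) : (l.length : ℝ) ≤ 2 + log N / ε := by
  have hlog : 0 ≤ log N / ε := div_nonneg (log_natCast_nonneg N) hε0.le
  match l, hl, hN with
  | [], _, _ => simp only [List.length_nil, Nat.cast_zero]; linarith
  | [_], _, _ => simp only [List.length_singleton, Nat.cast_one]; linarith
  | a :: b :: t, hl, hN =>
    obtain ⟨hab, hbt⟩ := List.isChain_cons_cons.1 hl
    have hb : (1 : ℝ) ≤ b := by
      have hpos : (0 : ℝ) < (1 - ε) * b := (Nat.cast_nonneg a).trans_lt hab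
      exact Nat.one_le_cast.2 (Nat.cast_pos.1 (pos_of_mul_pos_right hpos (sub_nonneg.2 hε1)))
    have hchain : ((b : ℝ) :: t.map (↑)).IsChain (fun x y => x ≤ (1 - ε) * y) :=
      (List.isChain_cons_map _).2 (hbt.imp fun _ _ h => h.le)
    have hbN : (b : ℝ) ≤ (1 - ε) ^ t.length * N := by
      simpa using hchain.le_pow_length_mul_of_forall_mem_le (sub_nonneg.2 hε1)
        (by simpa using fun x hx => hN x (List.mem_cons_of_mem a hx))
    have hkey : (t.length : ℝ) * ε ≤ log N :=
      nat_mul_le_log_of_one_le_one_sub_pow_mul hε1 (hb.trans hbN)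
    have : (t.length : ℝ) ≤ log N / ε := (le_div_iff₀ hε0).2 hkey
    simp only [List.length_cons, Nat.cast_add, Nat.cast_one]
    linarith

theorem card_filter_ne_zero_mono {ι : Type*} [Fintype ι] {f g : ι → ℕ} (h : f ≤ g) :
    #{i | f i ≠ 0} ≤ #{i | g i ≠ 0} :=
  card_le_card fun i => by
    simp only [mem_filter, mem_univ, true_and]
    exact fun hf => ((Nat.pos_of_ne_zero hf).trans_le (h i)).ne'

theorem stmt_4_general (n m : ℕ) (ε : ℝ) (f : ℕ → Fin n → ℕ)
    (hε0 : 0 < ε) (hε1 : ε < 1)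
    (hfmono : ∀ s t, s ≤ t → t ≤ m → ∀ i, f s i ≤ f t i) :
    ∀ l : List ℕ, l.Chain' (· < ·) → (∀ x ∈ l, x ≤ m) →
      l.Chain' (fun a b =>
        ¬((1 - ε) * ((Finset.univ.filter (fun i => f b i ≠ 0)).card : ℝ) ≤
            ((Finset.univ.filter (fun i => f a i ≠ 0)).card : ℝ) ∧
          ((Finset.univ.filter (fun i => f a i ≠ 0)).card : ℝ) ≤
            (1 + ε) * ((Finset.univ.filter (fun i => f b i ≠ 0)).card : ℝ))) →
      (l.length : ℝ) ≤ 2 + Real.log n / ε := by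
  intro l hlt hle hflip
  set g : ℕ → ℕ := fun t => #{i | f t i ≠ 0}
  have hdrop : (l.map g).IsChain (fun a b : ℕ => (a : ℝ) < (1 - ε) * b) := by
    refine (List.isChain_map g).2 (hlt.imp_of_mem₂ (fun a b _ hb hab hnot => ?_) hflip)
    have hgab : (g a : ℝ) ≤ g b := by
      exact_mod_cast card_filter_ne_zero_mono fun i => hfmono a b hab.le (hle b hb) i
    by_contra! h
    exact hnot ⟨h, hgab.trans (le_mul_of_one_le_left (Nat.cast_nonneg _) (by linarith))⟩
  have hbound : ∀ x ∈ l.map g, x ≤ n := by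
    simpa using fun t _ => (card_le_univ _).trans_eq (Fintype.card_fin n)
  simpa using length_le_two_add_log_div_of_isChain_lt_one_sub_mul hε0 hε1.le hdrop hbound

/-- Corollary 3.5, the `F₀` case: on an insertion-only stream of vectors of nonnegative
integers, every `ε`-flip chain in the sequence `t ↦ ‖f^{(t)}‖₀` (number of nonzero coordinates)
has length at most `2 + ln n / ε`. -/
theorem stmt_4 (n m : ℕ) (ε : ℝ) (f : ℕ → Fin n → ℕ)
    (hε0 : 0 < ε) (hε1 : ε < 1)
    (hf0 : f 0 = 0)
    (hfmono : ∀ s t, s ≤ t → t ≤ m → ∀ i, f s i ≤ f t i) :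
    ∀ l : List ℕ, l.Chain' (· < ·) → (∀ x ∈ l, x ≤ m) →
      l.Chain' (fun a b =>
        ¬((1 - ε) * ((Finset.univ.filter (fun i => f b i ≠ 0)).card : ℝ) ≤
            ((Finset.univ.filter (fun i => f a i ≠ 0)).card : ℝ) ∧
          ((Finset.univ.filter (fun i => f a i ≠ 0)).card : ℝ) ≤
            (1 + ε) * ((Finset.univ.filter (fun i => f b i ≠ 0)).card : ℝ))) →
      (l.length : ℝ) ≤ 2 + Real.log n / ε :=
  stmt_4_general n m ε f hε0 hε1 hfmono
end

section
/- Let β > 1, 0 < ε < 1, M ≥ 1, n ≥ 1 with n·M ≥ 1. Let f^{(0)}, f^{(1)}, …, f^{(m)} ∈ ℝ^n be nonzero vectors with nonnegative coordinates, coordinatewise nondecreasing in t, and satisfying ‖f^{(0)}‖_1 ≥ 1, ‖f^{(0)}‖_β ≥ 1, and ‖f^{(m)}‖_1 ≤ n·M. Then every ε-flip chain in the sequence (g_β(f^{(0)}), …, g_β(f^{(m)})), where g_β(x) = (‖x‖_1/‖x‖_β)^{β/(β-1)} is the exponential of the β-Rényi entropy, has length at most 1 + 4β·ln(nM)/((β-1)·ε).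 -/
/-- The `L₁` norm of a vector. -/
noncomputable def l1Norm {n : ℕ} (x : Fin n → ℝ) : ℝ := ∑ i, |x i|

/-- The `L_β` norm of a vector (for real `β`), via real powers. -/
noncomputable def lpNorm {n : ℕ} (β : ℝ) (x : Fin n → ℝ) : ℝ :=
  (∑ i, |x i| ^ β) ^ (1 / β)

/-- The exponential of the `β`-Rényi entropy: `g_β(x) = (‖x‖₁ / ‖x‖_β)^{β/(β-1)}`. -/
noncomputable def renyiExp {n : ℕ} (β : ℝ) (x : Fin n → ℝ) : ℝ :=
  (l1Norm x / lpNorm β x) ^ (β / (β - 1))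

/-!
Write `g = g_β`. Since `log g(x) = β/(β-1) · (log ‖x‖₁ - log ‖x‖_β)` and both norms only grow
along an insertion-only stream, each `ε`-flip between times `a < b` forces the potential
`Φ(t) = log ‖f^{(t)}‖₁ + log ‖f^{(t)}‖_β` to increase by at least `(β-1)/β · log(1+ε)`:
a jump of `log(1+ε)` in `log g` is a jump in the difference of two nondecreasing quantities,
hence bounded by the jump of their sum. The potential starts at `Φ(0) ≥ 0` and ends at
`Φ(m) ≤ 2 log(nM)` because `‖x‖_β ≤ ‖x‖₁`; together with `log(1+ε) ≥ ε/2` this bounds the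
number of flips.
-/

open Real

section Norms

variable {n : ℕ} {β : ℝ} {x y : Fin n → ℝ}

lemma l1Norm_pos (hx : x ≠ 0) : 0 < l1Norm x := by
  obtain ⟨i, hi⟩ := Function.ne_iff.1 hx
  exact Finset.sum_pos' (fun j _ => abs_nonneg _) ⟨i, Finset.mem_univ i, abs_pos.2 hi⟩

lemma lpNorm_pos (hx : x ≠ 0) : 0 < lpNorm β x := by
  obtain ⟨i, hi⟩ := Function.ne_iff.1 hx
  refine rpow_pos_of_pos (Finset.sum_pos' (fun j _ => by positivity) ?_) _
  exact ⟨i, Finset.mem_univ i, rpow_pos_of_pos (abs_pos.2 hi) _⟩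

lemma l1Norm_mono (hx : ∀ i, 0 ≤ x i) (hxy : ∀ i, x i ≤ y i) : l1Norm x ≤ l1Norm y :=
  Finset.sum_le_sum fun i _ => abs_le_abs_of_nonneg (hx i) (hxy i)

lemma lpNorm_mono (hβ : 0 < β) (hx : ∀ i, 0 ≤ x i) (hxy : ∀ i, x i ≤ y i) :
    lpNorm β x ≤ lpNorm β y := by
  refine rpow_le_rpow (Finset.sum_nonneg fun i _ => by positivity) ?_ (by positivity)
  exact Finset.sum_le_sum fun i _ =>
    rpow_le_rpow (abs_nonneg _) (abs_le_abs_of_nonneg (hx i) (hxy i)) hβ.le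

lemma Real.sum_rpow_le_rpow_sum {ι : Type*} (s : Finset ι) {f : ι → ℝ} (hf : ∀ i ∈ s, 0 ≤ f i)
    {p : ℝ} (hp : 1 ≤ p) : ∑ i ∈ s, f i ^ p ≤ (∑ i ∈ s, f i) ^ p := by
  classical
  induction s using Finset.induction_on with
  | empty => simp [zero_rpow (by linarith : p ≠ 0)]
  | insert a s ha ih =>
    have hs : ∀ i ∈ s, 0 ≤ f i := fun i hi => hf i (Finset.mem_insert_of_mem hi)
    rw [Finset.sum_insert ha, Finset.sum_insert ha]
    calc f a ^ p + ∑ i ∈ s, f i ^ p ≤ f a ^ p + (∑ i ∈ s, f i) ^ p := by gcongr; exact ih hs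
      _ ≤ (f a + ∑ i ∈ s, f i) ^ p :=
        add_rpow_le_rpow_add (hf a (Finset.mem_insert_self a s)) (Finset.sum_nonneg hs) hp

lemma lpNorm_le_l1Norm (hβ : 1 ≤ β) (x : Fin n → ℝ) : lpNorm β x ≤ l1Norm x := by
  have hS : 0 ≤ l1Norm x := Finset.sum_nonneg fun i _ => abs_nonneg _
  calc lpNorm β x ≤ (l1Norm x ^ β) ^ (1 / β) :=
        rpow_le_rpow (Finset.sum_nonneg fun i _ => by positivity)
          (sum_rpow_le_rpow_sum _ (fun i _ => abs_nonneg _) hβ) (by positivity)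
    _ = l1Norm x := by rw [one_div, rpow_rpow_inv hS (by linarith)]

lemma renyiExp_pos (hx : x ≠ 0) : 0 < renyiExp β x :=
  rpow_pos_of_pos (div_pos (l1Norm_pos hx) (lpNorm_pos hx)) _

lemma log_renyiExp (hx : x ≠ 0) :
    log (renyiExp β x) = β / (β - 1) * (log (l1Norm x) - log (lpNorm β x)) := by
  rw [renyiExp, log_rpow (div_pos (l1Norm_pos hx) (lpNorm_pos hx)),
    log_div (l1Norm_pos hx).ne' (lpNorm_pos hx).ne']

end Norms

lemma log_one_add_le_abs_log_sub {p q ε : ℝ} (hp : 0 < p) (hq : 0 < q) (hε : 0 ≤ ε)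
    (h : ¬((1 - ε) * q ≤ p ∧ p ≤ (1 + ε) * q)) : log (1 + ε) ≤ |log p - log q| := by
  rcases not_and_or.1 h with h | h <;> rw [not_le] at h
  · have hε1 : 0 < 1 - ε := pos_of_mul_pos_left (hp.trans h) hq.le
    have hlt : log p < log (1 - ε) + log q := by
      rw [← log_mul hε1.ne' hq.ne']
      exact log_lt_log hp h
    have hprod : log (1 - ε) + log (1 + ε) ≤ 0 := by
      rw [← log_mul hε1.ne' (by linarith)]
      exact log_nonpos (by nlinarith) (by nlinarith)
    rw [abs_sub_comm]
    exact le_trans (by linarith) (le_abs_self _)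
  · have hlt : log (1 + ε) + log q < log p := by
      rw [← log_mul (by linarith) hq.ne']
      exact log_lt_log (by positivity) h
    exact le_trans (by linarith) (le_abs_self _)

lemma half_le_log_one_add {ε : ℝ} (hε0 : 0 ≤ ε) (hε1 : ε ≤ 1) : ε / 2 ≤ log (1 + ε) := by
  have h := one_sub_inv_le_log_of_pos (by linarith : 0 < 1 + ε)
  have hinv : 1 - (1 + ε)⁻¹ = ε / (1 + ε) := by field_simp; ring
  rw [hinv] at h
  exact le_trans (div_le_div_of_nonneg_left hε0 (by linarith) (by linarith)) h

lemma log_one_add_le_of_not_renyiExp_close {n : ℕ} {β ε : ℝ} (hβ : 1 < β) (hε : 0 ≤ ε)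
    {x y : Fin n → ℝ} (hx : x ≠ 0) (hy : y ≠ 0) (hx0 : ∀ i, 0 ≤ x i) (hxy : ∀ i, x i ≤ y i)
    (h : ¬((1 - ε) * renyiExp β y ≤ renyiExp β x ∧ renyiExp β x ≤ (1 + ε) * renyiExp β y)) :
    (β - 1) / β * log (1 + ε) ≤
      (log (l1Norm y) + log (lpNorm β y)) - (log (l1Norm x) + log (lpNorm β x)) := by
  have hβ0 : 0 < β - 1 := by linarith
  have hdu : log (l1Norm x) ≤ log (l1Norm y) := log_le_log (l1Norm_pos hx) (l1Norm_mono hx0 hxy)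
  have hdv : log (lpNorm β x) ≤ log (lpNorm β y) :=
    log_le_log (lpNorm_pos hx) (lpNorm_mono (by linarith) hx0 hxy)
  have key := log_one_add_le_abs_log_sub (renyiExp_pos hx) (renyiExp_pos hy) hε h
  rw [log_renyiExp hx, log_renyiExp hy, ← mul_sub, abs_mul,
    abs_of_pos (by positivity : 0 < β / (β - 1))] at key
  calc (β - 1) / β * log (1 + ε)
      ≤ (β - 1) / β * (β / (β - 1) * |log (l1Norm x) - log (lpNorm β x) -
          (log (l1Norm y) - log (lpNorm β y))|) := by gcongr
    _ = |log (l1Norm x) - log (lpNorm β x) - (log (l1Norm y) - log (lpNorm β y))| := by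
      field_simp
    _ ≤ _ := abs_le.2 ⟨by linarith, by linarith⟩

lemma List.IsChain.length_mul_le_sub {α : Type*} [Preorder α] {Φ : α → ℝ} {m : α}
    (hΦ : MonotoneOn Φ (Set.Iic m)) {R : α → α → Prop} {δ : ℝ}
    (hR : ∀ a b, a < b → b ≤ m → R a b → δ ≤ Φ b - Φ a) :
    ∀ {a : α} {l : List α}, (a :: l).IsChain (· < ·) → (∀ x ∈ a :: l, x ≤ m) →
      (a :: l).IsChain R → l.length * δ ≤ Φ m - Φ a
  | a, [], _, hm, _ => by
    simpa using hΦ (hm a List.mem_cons_self) (Set.mem_Iic.2 le_rfl) (hm a List.mem_cons_self)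
  | a, b :: l, hlt, hm, hRl => by
    rw [List.isChain_cons_cons] at hlt hRl
    have hb := hm b (List.mem_cons_of_mem a List.mem_cons_self)
    have hstep := hR a b hlt.1 hb hRl.1
    have htail := length_mul_le_sub hΦ hR hlt.2 (fun x hx => hm x (List.mem_cons_of_mem a hx))
      hRl.2
    rw [List.length_cons, Nat.cast_succ]
    linarith

theorem stmt_7_general (n m : ℕ) (β ε M : ℝ) (f : ℕ → Fin n → ℝ)
    (hβ : 1 < β) (hε0 : 0 < ε) (hε1 : ε < 1)
    (hnM : 1 ≤ (n : ℝ) * M)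
    (hfne : ∀ t ≤ m, f t ≠ 0)
    (hfpos : ∀ t ≤ m, ∀ i, 0 ≤ f t i)
    (hfmono : ∀ s t, s ≤ t → t ≤ m → ∀ i, f s i ≤ f t i)
    (hl1 : 1 ≤ l1Norm (f 0))
    (hlβ : 1 ≤ lpNorm β (f 0))
    (hub : l1Norm (f m) ≤ (n : ℝ) * M) :
    ∀ l : List ℕ, l.Chain' (· < ·) → (∀ x ∈ l, x ≤ m) →
      l.Chain' (fun a b =>
        ¬((1 - ε) * renyiExp β (f b) ≤ renyiExp β (f a) ∧
          renyiExp β (f a) ≤ (1 + ε) * renyiExp β (f b))) →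
      (l.length : ℝ) ≤ 1 + 4 * β * Real.log ((n : ℝ) * M) / ((β - 1) * ε) := by
  intro l hlt hm hflip
  set L := log ((n : ℝ) * M)
  rcases l with _ | ⟨a, l⟩
  · have : 0 ≤ L := log_nonneg hnM
    simp only [List.length_nil, Nat.cast_zero]
    positivity
  set Φ : ℕ → ℝ := fun t => log (l1Norm (f t)) + log (lpNorm β (f t))
  have hΦ : MonotoneOn Φ (Set.Iic m) := fun s hs t ht hst =>
    add_le_add
      (log_le_log (l1Norm_pos (hfne s hs)) (l1Norm_mono (hfpos s hs) (hfmono s t hst ht)))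
      (log_le_log (lpNorm_pos (hfne s hs))
        (lpNorm_mono (by linarith) (hfpos s hs) (hfmono s t hst ht)))
  have hΦm : Φ m ≤ 2 * L := by
    have hpos := hfne m le_rfl
    have := log_le_log (l1Norm_pos hpos) hub
    have := log_le_log (lpNorm_pos hpos) ((lpNorm_le_l1Norm hβ.le (f m)).trans hub)
    linarith
  have ha : a ≤ m := hm a List.mem_cons_self
  have hΦa : 0 ≤ Φ a :=
    (add_nonneg (log_nonneg hl1) (log_nonneg hlβ)).trans (hΦ (Nat.zero_le m) ha (Nat.zero_le a))
  have hcount : l.length * ((β - 1) / β * log (1 + ε)) ≤ Φ m - Φ a :=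
    List.IsChain.length_mul_le_sub hΦ (fun a b hab hb h =>
      log_one_add_le_of_not_renyiExp_close hβ hε0.le (hfne a (hab.le.trans hb)) (hfne b hb)
        (hfpos a (hab.le.trans hb)) (hfmono a b hab.le hb) h) hlt hm hflip
  have hlog := half_le_log_one_add hε0.le hε1.le
  rw [List.length_cons, Nat.cast_succ, add_comm, add_le_add_iff_left, le_div_iff₀ (mul_pos (by linarith) hε0)]
  calc (l.length : ℝ) * ((β - 1) * ε) = 2 * β * (l.length * ((β - 1) / β * (ε / 2))) := by
        field_simp
    _ ≤ 2 * β * (l.length * ((β - 1) / β * log (1 + ε))) := by gcongr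
    _ ≤ 2 * β * (2 * L) := mul_le_mul_of_nonneg_left (by linarith) (by linarith)
    _ = 4 * β * L := by ring

/-- Flip-number bound for the exponential Rényi entropy on insertion-only streams (proved inside
Proposition 6.2): for `β > 1`, if the nonzero, coordinatewise nondecreasing nonnegative vectors
`f^{(0)}, …, f^{(m)}` satisfy `‖f^{(0)}‖₁ ≥ 1`, `‖f^{(0)}‖_β ≥ 1` and `‖f^{(m)}‖₁ ≤ n·M`, then
every `ε`-flip chain in `t ↦ g_β(f^{(t)})` has length at most `1 + 4β·ln(nM)/((β-1)·ε)`. -/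
theorem stmt_7 (n m : ℕ) (β ε M : ℝ) (f : ℕ → Fin n → ℝ)
    (hβ : 1 < β) (hε0 : 0 < ε) (hε1 : ε < 1) (hM : 1 ≤ M) (hn : 1 ≤ n)
    (hnM : 1 ≤ (n : ℝ) * M)
    (hfne : ∀ t ≤ m, f t ≠ 0)
    (hfpos : ∀ t ≤ m, ∀ i, 0 ≤ f t i)
    (hfmono : ∀ s t, s ≤ t → t ≤ m → ∀ i, f s i ≤ f t i)
    (hl1 : 1 ≤ l1Norm (f 0))
    (hlβ : 1 ≤ lpNorm β (f 0))
    (hub : l1Norm (f m) ≤ (n : ℝ) * M) :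
    ∀ l : List ℕ, l.Chain' (· < ·) → (∀ x ∈ l, x ≤ m) →
      l.Chain' (fun a b =>
        ¬((1 - ε) * renyiExp β (f b) ≤ renyiExp β (f a) ∧
          renyiExp β (f a) ≤ (1 + ε) * renyiExp β (f b))) →
      (l.length : ℝ) ≤ 1 + 4 * β * Real.log ((n : ℝ) * M) / ((β - 1) * ε) :=
  stmt_7_general n m β ε M f hβ hε0 hε1 hnM hfne hfpos hfmono hl1 hlβ hub
end

section
/- Let p ≥ 1, 0 < ε < 1, α ≥ 1, and let f_0, f_1, h_0, h_1 ∈ ℝ^n satisfy: 0 ≤ (h_0)_i ≤ (h_1)_i for every i; |(f_1)_i - (f_0)_i| ≤ (h_1)_i - (h_0)_i for every i; ‖f_1‖_p^p ≥ (1/α)·‖h_1‖_p^p; and ‖f_0‖_p ∉ [(1-ε)·‖f_1‖_p, (1+ε)·‖f_1‖_p]. Then ‖h_1‖_p^p ≥ (1 + ε^p/α)·‖h_0‖_p^p. -/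
/-- Superadditivity of `x ^ p` for `p ≥ 1` on nonnegative reals. -/
lemma rpow_superadd {a c p : ℝ} (ha : 0 ≤ a) (hc : 0 ≤ c) (hp : 1 ≤ p) :
    a ^ p + c ^ p ≤ (a + c) ^ p := by
  rcases eq_or_lt_of_le (add_nonneg ha hc) with h0 | h0
  · have haz : a = 0 := by linarith [ha, hc, h0.symm]
    have hcz : c = 0 := by linarith [ha, hc, h0.symm]
    simp [haz, hcz, Real.zero_rpow (by positivity : p ≠ 0)]
  · have hp1 : (0:ℝ) ≤ p - 1 := by linarith
    have h1 : a ^ p ≤ (a + c) ^ (p - 1) * a := by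
      calc a ^ p = a ^ (p - 1) * a := by
            rw [← Real.rpow_add_one' ha (by linarith)]; ring_nf
        _ ≤ (a + c) ^ (p - 1) * a :=
            mul_le_mul_of_nonneg_right (Real.rpow_le_rpow ha (by linarith) hp1) ha
    have h2 : c ^ p ≤ (a + c) ^ (p - 1) * c := by
      calc c ^ p = c ^ (p - 1) * c := by
            rw [← Real.rpow_add_one' hc (by linarith)]; ring_nf
        _ ≤ (a + c) ^ (p - 1) * c :=
            mul_le_mul_of_nonneg_right (Real.rpow_le_rpow hc (by linarith) hp1) hc
    calc a ^ p + c ^ p ≤ (a + c) ^ (p - 1) * (a + c) := by linarith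
      _ = (a + c) ^ p := by rw [← Real.rpow_add_one' h0.le (by linarith)]; ring_nf

/-- Core step of Lemma 8.1 (bounded-deletion streams): if `h₀ ≤ h₁` are nonnegative vectors,
`|f₁ - f₀| ≤ h₁ - h₀` coordinatewise, the `α`-bounded deletion property
`‖f₁‖_p^p ≥ (1/α)·‖h₁‖_p^p` holds, and `‖f₀‖_p ∉ [(1-ε)·‖f₁‖_p, (1+ε)·‖f₁‖_p]`, then
`‖h₁‖_p^p ≥ (1 + ε^p/α)·‖h₀‖_p^p`. Here `‖x‖_p^p = ∑ i, |x i|^p` and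
`‖x‖_p = (∑ i, |x i|^p)^{1/p}` via real powers. -/
theorem stmt_8 (n : ℕ) (p ε α : ℝ) (f0 f1 h0 h1 : Fin n → ℝ)
    (hp : 1 ≤ p) (hε0 : 0 < ε) (hε1 : ε < 1) (hα : 1 ≤ α)
    (hh : ∀ i, 0 ≤ h0 i ∧ h0 i ≤ h1 i)
    (hf : ∀ i, |f1 i - f0 i| ≤ h1 i - h0 i)
    (hbd : (1 / α) * (∑ i, |h1 i| ^ p) ≤ ∑ i, |f1 i| ^ p)
    (hflip : ¬((1 - ε) * (∑ i, |f1 i| ^ p) ^ (1 / p) ≤ (∑ i, |f0 i| ^ p) ^ (1 / p) ∧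
              (∑ i, |f0 i| ^ p) ^ (1 / p) ≤ (1 + ε) * (∑ i, |f1 i| ^ p) ^ (1 / p))) :
    (1 + ε ^ p / α) * (∑ i, |h0 i| ^ p) ≤ ∑ i, |h1 i| ^ p := by
  have hp0 : 0 < p := lt_of_lt_of_le one_pos hp
  set S0 := ∑ i, |f0 i| ^ p with hS0
  set S1 := ∑ i, |f1 i| ^ p with hS1
  set D := ∑ i, |f1 i - f0 i| ^ p with hD
  set H0 := ∑ i, |h0 i| ^ p with hH0
  set H1 := ∑ i, |h1 i| ^ p with hH1
  have hS0n : 0 ≤ S0 := Finset.sum_nonneg fun i _ => Real.rpow_nonneg (abs_nonneg _) p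
  have hS1n : 0 ≤ S1 := Finset.sum_nonneg fun i _ => Real.rpow_nonneg (abs_nonneg _) p
  have hDn : 0 ≤ D := Finset.sum_nonneg fun i _ => Real.rpow_nonneg (abs_nonneg _) p
  have hH0n : 0 ≤ H0 := Finset.sum_nonneg fun i _ => Real.rpow_nonneg (abs_nonneg _) p
  -- Minkowski both ways
  have mink1 : S1 ^ (1/p) ≤ S0 ^ (1/p) + D ^ (1/p) := by
    have := Real.Lp_add_le (Finset.univ) f0 (fun i => f1 i - f0 i) hp
    simpa using this
  have hDsym : D = ∑ i, |f0 i - f1 i| ^ p := by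
    rw [hD]; exact Finset.sum_congr rfl fun i _ => by rw [abs_sub_comm]
  have mink2 : S0 ^ (1/p) ≤ S1 ^ (1/p) + D ^ (1/p) := by
    rw [hDsym]
    have := Real.Lp_add_le (Finset.univ) f1 (fun i => f0 i - f1 i) hp
    simpa using this
  -- flip gives ε * S1^(1/p) ≤ D^(1/p)
  have hflip' : ε * S1 ^ (1/p) ≤ D ^ (1/p) := by
    rcases not_and_or.mp hflip with h | h
    · have h := not_le.mp h
      nlinarith [mink1]
    · have h := not_le.mp h
      nlinarith [mink2]
  -- raise to p : ε^p * S1 ≤ D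
  have hεS : ε ^ p * S1 ≤ D := by
    have h1 : (ε * S1 ^ (1/p)) ^ p ≤ (D ^ (1/p)) ^ p :=
      Real.rpow_le_rpow (by positivity) hflip' hp0.le
    rw [Real.mul_rpow hε0.le (Real.rpow_nonneg hS1n _)] at h1
    rw [← Real.rpow_mul hS1n, ← Real.rpow_mul hDn, one_div_mul_cancel hp0.ne',
      Real.rpow_one, Real.rpow_one] at h1
    exact h1
  -- D ≤ ∑ (h1 - h0)^p and superadditivity
  have key : H0 + D ≤ H1 := by
    rw [hH0, hD, hH1, ← Finset.sum_add_distrib]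
    apply Finset.sum_le_sum
    intro i _
    obtain ⟨h0n, h01⟩ := hh i
    have hd : 0 ≤ h1 i - h0 i := by linarith
    have e1 : |f1 i - f0 i| ^ p ≤ (h1 i - h0 i) ^ p :=
      Real.rpow_le_rpow (abs_nonneg _) (hf i) hp0.le
    have e2 : h0 i ^ p + (h1 i - h0 i) ^ p ≤ h1 i ^ p := by
      have := rpow_superadd h0n hd hp
      simpa using this
    rw [abs_of_nonneg h0n, abs_of_nonneg (le_trans h0n h01)]
    linarith
  -- H0 ≤ H1
  have hH01 : H0 ≤ H1 := by
    rw [hH0, hH1]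
    apply Finset.sum_le_sum
    intro i _
    obtain ⟨h0n, h01⟩ := hh i
    exact Real.rpow_le_rpow (abs_nonneg _) (by rw [abs_of_nonneg h0n, abs_of_nonneg (le_trans h0n h01)]; exact h01) hp0.le
  -- combine
  have hεp : 0 ≤ ε ^ p := Real.rpow_nonneg hε0.le p
  have hα0 : 0 < α := lt_of_lt_of_le one_pos hα
  have chain : ε ^ p / α * H0 ≤ D := by
    calc ε ^ p / α * H0 ≤ ε ^ p / α * H1 := by
          apply mul_le_mul_of_nonneg_left hH01 (by positivity)
      _ = ε ^ p * ((1/α) * H1) := by ring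
      _ ≤ ε ^ p * S1 := mul_le_mul_of_nonneg_left hbd hεp
      _ ≤ D := hεS
  linarith
end

section
/- Let p ≥ 1, 0 < ε < 1, α ≥ 1, M ≥ 1, and let f^{(0)}, …, f^{(m)} ∈ ℝ^n and h^{(0)}, …, h^{(m)} ∈ ℝ^n satisfy: f^{(0)} = 0 and h^{(0)} = 0; each h^{(t)} has nonnegative coordinates; |f^{(t)}_i - f^{(s)}_i| ≤ h^{(t)}_i - h^{(s)}_i for all 0 ≤ s ≤ t ≤ m and every coordinate i; ‖f^{(t)}‖_p^p ≥ (1/α)·‖h^{(t)}‖_p^p for every t (the α-bounded deletion property); ‖h^{(t)}‖_p^p ≥ 1 whenever h^{(t)} ≠ 0; and ‖h^{(m)}‖_p^p ≤ n·M^p. Then every ε-flip chain in the sequence (‖f^{(0)}‖_p, ‖f^{(1)}‖_p, …, ‖f^{(m)}‖_p) has length at most 2 + 2α·(ln n + p·ln M)/ε^p. -/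
/-!
Write `F t = ‖f⁽ᵗ⁾‖_p^p` and `H t = ‖h⁽ᵗ⁾‖_p^p`. If `‖f⁽ᵃ⁾‖_p` and `‖f⁽ᵇ⁾‖_p` (`a < b`) are not within
a factor `1 ± ε` of each other, the reverse Minkowski inequality gives
`ε^p F b < ‖f⁽ᵇ⁾ - f⁽ᵃ⁾‖_p^p`, and superadditivity of `x ↦ x^p` bounds the right side by `H b - H a`.
Bounded deletion (`H b ≤ α F b`) turns this into `H a < (1 - ε^p/α) H b`: along a flip chain the
monotone quantity `H` grows geometrically, from at least `1` to at most `n M^p`, so the chain has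
at most `2 + α log (n M^p) / ε^p` elements.
-/

open Finset

theorem Real.sub_rpow_le_rpow_sub_rpow {p a b : ℝ} (hp : 1 ≤ p) (ha : 0 ≤ a) (hab : a ≤ b) :
    (b - a) ^ p ≤ b ^ p - a ^ p := by
  have := Real.add_rpow_le_rpow_add ha (sub_nonneg.2 hab) hp
  rw [add_sub_cancel] at this
  linarith

theorem lt_abs_sub_of_notMem_Icc {ε x y : ℝ} (h : x ∉ Set.Icc ((1 - ε) * y) ((1 + ε) * y)) :
    ε * y < |x - y| := by
  rw [Set.mem_Icc, not_and_or] at h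
  rcases h with h | h
  · rw [abs_sub_comm]
    exact lt_of_lt_of_le (by linarith) (le_abs_self _)
  · exact lt_of_lt_of_le (by linarith) (le_abs_self _)

theorem le_pow_mul_of_isChain {β : Type*} {g : β → ℝ} {c B : ℝ} (hc : 0 ≤ c) :
    ∀ {x : β} {l : List β}, (x :: l).IsChain (fun a b => g a ≤ c * g b) →
      (∀ y ∈ x :: l, g y ≤ B) → g x ≤ c ^ l.length * B
  | x, [], _, hB => by simpa using hB x (by simp)
  | x, y :: l, hchain, hB => by
    rw [List.isChain_cons_cons] at hchain
    have ih := le_pow_mul_of_isChain hc hchain.2 fun z hz => hB z (List.mem_cons_of_mem x hz)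
    calc g x ≤ c * g y := hchain.1
      _ ≤ c * (c ^ l.length * B) := mul_le_mul_of_nonneg_left ih hc
      _ = c ^ (y :: l).length * B := by rw [List.length_cons, pow_succ]; ring

theorem natCast_mul_le_log_of_one_le_pow_mul {δ A : ℝ} {k : ℕ} (hδ : δ ≤ 1)
    (h : 1 ≤ (1 - δ) ^ k * A) : k * δ ≤ Real.log A := by
  have hpow : (1 - δ) ^ k ≤ Real.exp (-(k * δ)) := by
    rw [← mul_neg, Real.exp_nat_mul]
    exact pow_le_pow_left₀ (by linarith) (by linarith [Real.add_one_le_exp (-δ)]) k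
  have hA : 0 < A := pos_of_mul_pos_right (one_pos.trans_le h) (pow_nonneg (by linarith) k)
  rw [Real.le_log_iff_exp_le hA]
  have := h.trans (mul_le_mul_of_nonneg_right hpow hA.le)
  rw [Real.exp_neg, inv_mul_eq_div, one_le_div (Real.exp_pos _)] at this
  exact this

section powSum

variable {ι : Type*} [Fintype ι] {p : ℝ}

noncomputable def powSum (p : ℝ) (x : ι → ℝ) : ℝ := ∑ i, |x i| ^ p

theorem powSum_nonneg (p : ℝ) (x : ι → ℝ) : 0 ≤ powSum p x :=
  sum_nonneg fun _ _ => Real.rpow_nonneg (abs_nonneg _) p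

theorem powSum_zero (hp : p ≠ 0) : powSum p (0 : ι → ℝ) = 0 := by
  simp [powSum, Real.zero_rpow hp]

theorem abs_sub_powSum_rpow_le (hp : 1 ≤ p) (x y : ι → ℝ) :
    |powSum p x ^ (1 / p) - powSum p y ^ (1 / p)| ≤ powSum p (x - y) ^ (1 / p) := by
  have key : ∀ u v : ι → ℝ, powSum p u ^ (1 / p) ≤ powSum p (u - v) ^ (1 / p) + powSum p v ^ (1 / p) :=
    fun u v => by simpa [powSum] using Real.Lp_add_le univ (u - v) v hp
  have hcomm : powSum p (y - x) = powSum p (x - y) := by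
    simp only [powSum, Pi.sub_apply, abs_sub_comm]
  rw [abs_sub_le_iff]
  constructor
  · linarith [key x y]
  · have := key y x
    rw [hcomm] at this
    linarith

theorem rpow_mul_powSum_lt_of_notMem_Icc (hp : 1 ≤ p) {ε : ℝ} (hε : 0 ≤ ε) {x y : ι → ℝ}
    (hflip : powSum p x ^ (1 / p) ∉
      Set.Icc ((1 - ε) * powSum p y ^ (1 / p)) ((1 + ε) * powSum p y ^ (1 / p))) :
    ε ^ p * powSum p y < powSum p (y - x) := by
  have hp0 : 0 < p := one_pos.trans_le hp
  have hroot : ∀ z : ι → ℝ, (powSum p z ^ (1 / p)) ^ p = powSum p z := fun z => by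
    rw [one_div, Real.rpow_inv_rpow (powSum_nonneg p z) hp0.ne']
  have hlt : ε * powSum p y ^ (1 / p) < powSum p (y - x) ^ (1 / p) := by
    have := abs_sub_powSum_rpow_le hp y x
    rw [abs_sub_comm] at this
    exact (lt_abs_sub_of_notMem_Icc hflip).trans_le this
  have hy := Real.rpow_nonneg (powSum_nonneg p y) (1 / p)
  have := Real.rpow_lt_rpow (mul_nonneg hε hy) hlt hp0
  rwa [Real.mul_rpow hε hy, hroot, hroot] at this

variable {f h : ℕ → ι → ℝ} {m : ℕ}

theorem powSum_sub_le_sub_powSum (hp : 1 ≤ p) (hh : ∀ t ≤ m, ∀ i, 0 ≤ h t i)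
    (hdiff : ∀ s t, s ≤ t → t ≤ m → ∀ i, |f t i - f s i| ≤ h t i - h s i)
    {a b : ℕ} (hab : a ≤ b) (hb : b ≤ m) :
    powSum p (f b - f a) ≤ powSum p (h b) - powSum p (h a) := by
  rw [powSum, powSum, powSum, ← sum_sub_distrib]
  refine sum_le_sum fun i _ => ?_
  have ha := hh a (hab.trans hb) i
  have hab' : h a i ≤ h b i := by linarith [hdiff a b hab hb i, abs_nonneg (f b i - f a i)]
  rw [abs_of_nonneg ha, abs_of_nonneg (ha.trans hab')]
  exact (Real.rpow_le_rpow (abs_nonneg _) (hdiff a b hab hb i) (by linarith)).trans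
    (Real.sub_rpow_le_rpow_sub_rpow hp ha hab')

theorem powSum_le_powSum (hp : 1 ≤ p) (hh : ∀ t ≤ m, ∀ i, 0 ≤ h t i)
    (hdiff : ∀ s t, s ≤ t → t ≤ m → ∀ i, |f t i - f s i| ≤ h t i - h s i)
    {a b : ℕ} (hab : a ≤ b) (hb : b ≤ m) : powSum p (h a) ≤ powSum p (h b) := by
  linarith [powSum_sub_le_sub_powSum hp hh hdiff hab hb, powSum_nonneg p (f b - f a)]

theorem powSum_lt_mul_powSum_of_flip (hp : 1 ≤ p) (hh : ∀ t ≤ m, ∀ i, 0 ≤ h t i)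
    (hdiff : ∀ s t, s ≤ t → t ≤ m → ∀ i, |f t i - f s i| ≤ h t i - h s i)
    {ε α : ℝ} (hε : 0 ≤ ε) {a b : ℕ} (hab : a ≤ b) (hb : b ≤ m)
    (hbd : (1 / α) * powSum p (h b) ≤ powSum p (f b))
    (hflip : powSum p (f a) ^ (1 / p) ∉
      Set.Icc ((1 - ε) * powSum p (f b) ^ (1 / p)) ((1 + ε) * powSum p (f b) ^ (1 / p))) :
    powSum p (h a) < (1 - ε ^ p / α) * powSum p (h b) := by
  have hgap := (rpow_mul_powSum_lt_of_notMem_Icc hp hε hflip).trans_le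
    (powSum_sub_le_sub_powSum hp hh hdiff hab hb)
  have hdel := mul_le_mul_of_nonneg_left hbd (Real.rpow_nonneg hε p)
  have : ε ^ p * (1 / α * powSum p (h b)) = ε ^ p / α * powSum p (h b) := by ring
  linarith

theorem one_le_pow_mul_powSum_of_flip_chain (hp : 1 ≤ p) (hh : ∀ t ≤ m, ∀ i, 0 ≤ h t i)
    (hdiff : ∀ s t, s ≤ t → t ≤ m → ∀ i, |f t i - f s i| ≤ h t i - h s i)
    {ε α : ℝ} (hε : 0 ≤ ε) (hδ : ε ^ p / α < 1)
    (hbd : ∀ t ≤ m, (1 / α) * powSum p (h t) ≤ powSum p (f t))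
    (hlb : ∀ t ≤ m, h t ≠ 0 → 1 ≤ powSum p (h t))
    {t₁ t₂ : ℕ} {l : List ℕ} (hlt : (t₁ :: t₂ :: l).IsChain (· < ·))
    (hle : ∀ t ∈ t₁ :: t₂ :: l, t ≤ m)
    (hflip : (t₁ :: t₂ :: l).IsChain fun a b => powSum p (f a) ^ (1 / p) ∉
      Set.Icc ((1 - ε) * powSum p (f b) ^ (1 / p)) ((1 + ε) * powSum p (f b) ^ (1 / p))) :
    1 ≤ (1 - ε ^ p / α) ^ l.length * powSum p (h m) := by
  have hchain : (t₁ :: t₂ :: l).IsChain fun a b =>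
      powSum p (h a) < (1 - ε ^ p / α) * powSum p (h b) := by
    rw [List.isChain_iff_getElem] at hlt hflip ⊢
    intro i hi
    have hb := hle (t₁ :: t₂ :: l)[i + 1] (List.getElem_mem _)
    exact powSum_lt_mul_powSum_of_flip hp hh hdiff hε (hlt i hi).le hb (hbd _ hb) (hflip i hi)
  rw [List.isChain_cons_cons] at hchain
  have hpos : 0 < powSum p (h t₂) :=
    pos_of_mul_pos_right ((powSum_nonneg p _).trans_lt hchain.1) (by linarith)
  have hne : h t₂ ≠ 0 := by
    rintro h0
    rw [h0, powSum_zero (by linarith)] at hpos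
    exact lt_irrefl _ hpos
  calc 1 ≤ powSum p (h t₂) := hlb t₂ (hle _ (by simp)) hne
    _ ≤ (1 - ε ^ p / α) ^ l.length * powSum p (h m) :=
      le_pow_mul_of_isChain (g := fun t => powSum p (h t)) (by linarith) (hchain.2.imp fun _ _ => le_of_lt) fun t ht =>
        powSum_le_powSum hp hh hdiff (hle t (List.mem_cons_of_mem _ ht)) le_rfl

end powSum

theorem stmt_9_general (n m : ℕ) (p ε α M : ℝ) (f h : ℕ → Fin n → ℝ)
    (hp : 1 ≤ p) (hε0 : 0 < ε) (hε1 : ε < 1) (hα : 1 ≤ α) (hM : 1 ≤ M)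
    (hhpos : ∀ t ≤ m, ∀ i, 0 ≤ h t i)
    (hdiff : ∀ s t, s ≤ t → t ≤ m → ∀ i, |f t i - f s i| ≤ h t i - h s i)
    (hbd : ∀ t ≤ m, (1 / α) * (∑ i, |h t i| ^ p) ≤ ∑ i, |f t i| ^ p)
    (hlb : ∀ t ≤ m, h t ≠ 0 → 1 ≤ ∑ i, |h t i| ^ p)
    (hub : ∑ i, |h m i| ^ p ≤ (n : ℝ) * M ^ p) :
    ∀ l : List ℕ, l.Chain' (· < ·) → (∀ x ∈ l, x ≤ m) →
      l.Chain' (fun a b =>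
        ¬((1 - ε) * (∑ i, |f b i| ^ p) ^ (1 / p) ≤ (∑ i, |f a i| ^ p) ^ (1 / p) ∧
          (∑ i, |f a i| ^ p) ^ (1 / p) ≤ (1 + ε) * (∑ i, |f b i| ^ p) ^ (1 / p))) →
      (l.length : ℝ) ≤ 2 + 2 * α * (Real.log n + p * Real.log M) / ε ^ p := by
  intro l hlt hle hflip
  have hεp : 0 < ε ^ p := Real.rpow_pos_of_pos hε0 p
  have hα0 : 0 < α := one_pos.trans_le hα
  have hlog : 0 ≤ Real.log n + p * Real.log M :=
    add_nonneg (Real.log_natCast_nonneg n) (mul_nonneg (by linarith) (Real.log_nonneg hM))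
  have hrhs : 0 ≤ 2 * α * (Real.log n + p * Real.log M) / ε ^ p := by positivity
  obtain _ | ⟨t₁, _ | ⟨t₂, l⟩⟩ := l
  · simp only [List.length_nil, Nat.cast_zero]; linarith
  · simp only [List.length_singleton, Nat.cast_one]; linarith
  have hδ : ε ^ p / α < 1 :=
    (div_lt_one hα0).2 ((Real.rpow_lt_one hε0.le hε1 (by linarith)).trans_le hα)
  have hgrow := (one_le_pow_mul_powSum_of_flip_chain hp hhpos hdiff hε0.le hδ hbd hlb hlt hle
    hflip).trans (mul_le_mul_of_nonneg_left hub (pow_nonneg (by linarith) _))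
  have hn : (n : ℝ) ≠ 0 := by
    rintro hn
    rw [hn, zero_mul, mul_zero] at hgrow
    linarith
  have hk := natCast_mul_le_log_of_one_le_pow_mul hδ.le hgrow
  rw [Real.log_mul hn (Real.rpow_pos_of_pos (by linarith) p).ne', Real.log_rpow (by linarith),
    mul_div_assoc', div_le_iff₀ hα0] at hk
  have hl : (l.length : ℝ) ≤ 2 * α * (Real.log n + p * Real.log M) / ε ^ p := by
    rw [le_div_iff₀ hεp]
    nlinarith
  simp only [List.length_cons, Nat.cast_add, Nat.cast_one]
  linarith

/-- Lemma 8.1: for an `α`-bounded deletion stream `f^{(0)}, …, f^{(m)}` with absolute-value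
(insertion-only) stream `h^{(0)}, …, h^{(m)}`, every `ε`-flip chain in the sequence
`t ↦ ‖f^{(t)}‖_p` has length at most `2 + 2α·(ln n + p·ln M)/ε^p`. Here
`‖x‖_p = (∑ i, |x i|^p)^{1/p}` and `‖x‖_p^p = ∑ i, |x i|^p` via real powers. -/
theorem stmt_9 (n m : ℕ) (p ε α M : ℝ) (f h : ℕ → Fin n → ℝ)
    (hp : 1 ≤ p) (hε0 : 0 < ε) (hε1 : ε < 1) (hα : 1 ≤ α) (hM : 1 ≤ M)
    (hf0 : f 0 = 0) (hh0 : h 0 = 0)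
    (hhpos : ∀ t ≤ m, ∀ i, 0 ≤ h t i)
    (hdiff : ∀ s t, s ≤ t → t ≤ m → ∀ i, |f t i - f s i| ≤ h t i - h s i)
    (hbd : ∀ t ≤ m, (1 / α) * (∑ i, |h t i| ^ p) ≤ ∑ i, |f t i| ^ p)
    (hlb : ∀ t ≤ m, h t ≠ 0 → 1 ≤ ∑ i, |h t i| ^ p)
    (hub : ∑ i, |h m i| ^ p ≤ (n : ℝ) * M ^ p) :
    ∀ l : List ℕ, l.Chain' (· < ·) → (∀ x ∈ l, x ≤ m) →
      l.Chain' (fun a b =>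
        ¬((1 - ε) * (∑ i, |f b i| ^ p) ^ (1 / p) ≤ (∑ i, |f a i| ^ p) ^ (1 / p) ∧
          (∑ i, |f a i| ^ p) ^ (1 / p) ≤ (1 + ε) * (∑ i, |f b i| ^ p) ^ (1 / p))) →
      (l.length : ℝ) ≤ 2 + 2 * α * (Real.log n + p * Real.log M) / ε ^ p :=
  stmt_9_general n m p ε α M f h hp hε0 hε1 hα hM hhpos hdiff hbd hlb hub
end

section
/- Let 0 < ε < 1 and let ā = (a_0, …, a_m) and b̄ = (b_0, …, b_m) be finite sequences of nonnegative real numbers with (1-ε/8)·a_i ≤ b_i ≤ (1+ε/8)·a_i for every 0 ≤ i ≤ m. Then every ε-flip chain in ā is an (ε/2)-flip chain in b̄; consequently, the ε-flip number of ā is at most the (ε/2)-flip number of b̄. -/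
/-!
If `b` approximates `a` within the factor `1 ± ε/8`, then closeness of `b i` and `b j` within
`1 ± ε/2` forces closeness of `a i` and `a j` within `1 ± ε`: the three errors compound to
`(1 + ε/2)(1 + ε/8)/(1 - ε/8) ≤ 1 + ε` and `(1 - ε/2)(1 - ε/8)/(1 + ε/8) ≥ 1 - ε`, the first
for `ε ≤ 4/3`. Hence no consecutive pair of an `ε`-flip chain of `a` is `ε/2`-close in `b`.
-/

def MulClose (ε x y : ℝ) : Prop :=
  (1 - ε) * y ≤ x ∧ x ≤ (1 + ε) * y

namespace MulClose

variable {ε a₁ a₂ b₁ b₂ : ℝ}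

theorem le_of_approx (hε0 : 0 ≤ ε) (hε1 : ε ≤ 4 / 3) (ha₂ : 0 ≤ a₂)
    (h₁ : MulClose (ε / 8) b₁ a₁) (h₂ : MulClose (ε / 8) b₂ a₂) (hb : MulClose (ε / 2) b₁ b₂) :
    a₁ ≤ (1 + ε) * a₂ := by
  have hfactor : (1 + ε / 2) * (1 + ε / 8) ≤ (1 + ε) * (1 - ε / 8) := by nlinarith
  have hpos : 0 < 1 - ε / 8 := by linarith
  refine le_of_mul_le_mul_left ?_ hpos
  calc (1 - ε / 8) * a₁ ≤ b₁ := h₁.1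
    _ ≤ (1 + ε / 2) * b₂ := hb.2
    _ ≤ (1 + ε / 2) * ((1 + ε / 8) * a₂) := mul_le_mul_of_nonneg_left h₂.2 (by linarith)
    _ ≤ (1 + ε) * (1 - ε / 8) * a₂ := by rw [← mul_assoc]; gcongr
    _ = (1 - ε / 8) * ((1 + ε) * a₂) := by ring

theorem ge_of_approx (hε0 : 0 ≤ ε) (hε1 : ε ≤ 2) (ha₂ : 0 ≤ a₂)
    (h₁ : MulClose (ε / 8) b₁ a₁) (h₂ : MulClose (ε / 8) b₂ a₂) (hb : MulClose (ε / 2) b₁ b₂) :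
    (1 - ε) * a₂ ≤ a₁ := by
  have hfactor : (1 - ε) * (1 + ε / 8) ≤ (1 - ε / 2) * (1 - ε / 8) := by nlinarith
  have hpos : 0 < 1 + ε / 8 := by linarith
  refine le_of_mul_le_mul_left ?_ hpos
  calc (1 + ε / 8) * ((1 - ε) * a₂) = (1 - ε) * (1 + ε / 8) * a₂ := by ring
    _ ≤ (1 - ε / 2) * (1 - ε / 8) * a₂ := by gcongr
    _ = (1 - ε / 2) * ((1 - ε / 8) * a₂) := by ring
    _ ≤ (1 - ε / 2) * b₂ := mul_le_mul_of_nonneg_left h₂.1 (by linarith)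
    _ ≤ b₁ := hb.1
    _ ≤ (1 + ε / 8) * a₁ := h₁.2

theorem of_approx (hε0 : 0 ≤ ε) (hε1 : ε ≤ 4 / 3) (ha₂ : 0 ≤ a₂)
    (h₁ : MulClose (ε / 8) b₁ a₁) (h₂ : MulClose (ε / 8) b₂ a₂) (hb : MulClose (ε / 2) b₁ b₂) :
    MulClose ε a₁ a₂ :=
  ⟨ge_of_approx hε0 (by linarith) ha₂ h₁ h₂ hb, le_of_approx hε0 hε1 ha₂ h₁ h₂ hb⟩

end MulClose

theorem stmt_11_general (m : ℕ) (ε : ℝ) (a b : ℕ → ℝ)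
    (hε0 : 0 < ε) (hε1 : ε < 1)
    (ha : ∀ i ≤ m, 0 ≤ a i)
    (hab : ∀ i ≤ m, (1 - ε / 8) * a i ≤ b i ∧ b i ≤ (1 + ε / 8) * a i) :
    ∀ l : List ℕ, l.Chain' (· < ·) → (∀ x ∈ l, x ≤ m) →
      l.Chain' (fun i j => ¬((1 - ε) * a j ≤ a i ∧ a i ≤ (1 + ε) * a j)) →
      l.Chain' (fun i j => ¬((1 - ε / 2) * b j ≤ b i ∧ b i ≤ (1 + ε / 2) * b j)) := by
  intro l _ hle hflip
  refine List.IsChain.imp_of_mem_imp (fun i j hi hj hflip_ij hclose => hflip_ij ?_) hflip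
  exact MulClose.of_approx hε0.le (by linarith) (ha j (hle j hj))
    (hab i (hle i hi)) (hab j (hle j hj)) hclose

/-- Comparison principle for flip numbers (used in Proposition 6.2): if the nonnegative
sequences `a` and `b` satisfy `(1 - ε/8)·a i ≤ b i ≤ (1 + ε/8)·a i` for all `i ≤ m`, then every
`ε`-flip chain in `a` is an `(ε/2)`-flip chain in `b`; consequently,
`λ_ε(a) ≤ λ_{ε/2}(b)`. -/
theorem stmt_11 (m : ℕ) (ε : ℝ) (a b : ℕ → ℝ)
    (hε0 : 0 < ε) (hε1 : ε < 1)
    (ha : ∀ i ≤ m, 0 ≤ a i) (hb : ∀ i ≤ m, 0 ≤ b i)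
    (hab : ∀ i ≤ m, (1 - ε / 8) * a i ≤ b i ∧ b i ≤ (1 + ε / 8) * a i) :
    ∀ l : List ℕ, l.Chain' (· < ·) → (∀ x ∈ l, x ≤ m) →
      l.Chain' (fun i j => ¬((1 - ε) * a j ≤ a i ∧ a i ≤ (1 + ε) * a j)) →
      l.Chain' (fun i j => ¬((1 - ε / 2) * b j ≤ b i ∧ b i ≤ (1 + ε / 2) * b j)) :=
  stmt_11_general m ε a b hε0 hε1 ha hab
end

section
/- Let (Ω, μ) be a probability space, let Z : Ω → ℝ be an integrable random variable such that Z and -Z are identically distributed, and let B be an independent uniform random variable on {0, 1} (formally, work on the product of (Ω, μ) with the uniform measure on {0,1}). Fix s ∈ ℝ and define the random variable W by: W = s + 1 + 2Z on the event {Z > 0} ∪ ({Z = 0} ∩ {B = 1}), and W = s + 4 + 4Z on the event {Z < 0} ∪ ({Z = 0} ∩ {B = 0}). Then E[W] = s + 5/2 - E[|Z|]. -/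
/-!
Averaging over the coin, the conditional mean of `W` given `Z = x` is
`s + 5/2 - |x| + 3x - (3/2) sign x`. The last two terms are odd in `x`, so by the symmetry
of `Z` their expectations vanish.
-/

open MeasureTheory

theorem integral_comp_eq_zero_of_map_eq_map_neg {Ω : Type*} [MeasurableSpace Ω] {μ : Measure Ω}
    {Z : Ω → ℝ} (hZ : Measurable Z) (hsym : μ.map Z = μ.map (fun ω => -Z ω))
    {f : ℝ → ℝ} (hf : Measurable f) (hodd : ∀ x, f (-x) = -f x) :
    ∫ ω, f (Z ω) ∂μ = 0 := by
  have h : ∫ ω, f (Z ω) ∂μ = -∫ ω, f (Z ω) ∂μ := calc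
    ∫ ω, f (Z ω) ∂μ = ∫ x, f x ∂(μ.map Z) :=
      (integral_map hZ.aemeasurable hf.aestronglyMeasurable).symm
    _ = ∫ ω, f (-Z ω) ∂μ := by
      rw [hsym]; exact integral_map hZ.neg.aemeasurable hf.aestronglyMeasurable
    _ = -∫ ω, f (Z ω) ∂μ := by simp only [hodd, integral_neg]
  linarith

theorem Real.measurable_sign : Measurable Real.sign :=
  Measurable.ite measurableSet_Iio measurable_const <|
    Measurable.ite measurableSet_Ioi measurable_const measurable_const

theorem Real.abs_sign_le_one (r : ℝ) : |Real.sign r| ≤ 1 := by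
  rcases Real.sign_apply_eq r with h | h | h <;> simp [h]

theorem PMF.integral_uniformOfFintype_bool (f : Bool → ℝ) :
    ∫ b, f b ∂(PMF.uniformOfFintype Bool).toMeasure = (f true + f false) / 2 := by
  simp [PMF.integral_eq_sum, PMF.uniformOfFintype_apply]
  ring

noncomputable def driftStep (s x : ℝ) (b : Bool) : ℝ :=
  if 0 < x ∨ (x = 0 ∧ b = true) then s + 1 + 2 * x else s + 4 + 4 * x

theorem measurable_driftStep (s : ℝ) (b : Bool) : Measurable (fun x => driftStep s x b) := by
  refine Measurable.ite ?_ (by fun_prop) (by fun_prop)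
  exact measurableSet_Ioi.union ((measurableSet_singleton 0).inter (.const _))

theorem abs_driftStep_le (s x : ℝ) (b : Bool) : |driftStep s x b| ≤ |s| + 4 + 4 * |x| := by
  unfold driftStep
  split_ifs
  · have := abs_add_three s 1 (2 * x)
    rw [abs_mul] at this
    norm_num at this
    linarith [abs_nonneg x]
  · have := abs_add_three s 4 (4 * x)
    rw [abs_mul] at this
    norm_num at this
    linarith

theorem driftStep_true_add_false_div_two (s x : ℝ) :
    (driftStep s x true + driftStep s x false) / 2 =
      s + 5 / 2 - |x| + 3 * x - 3 / 2 * Real.sign x := by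
  rcases lt_trichotomy x 0 with hx | rfl | hx
  · simp [driftStep, hx.not_gt, hx.ne, abs_of_neg hx, Real.sign_of_neg hx]; ring
  · simp [driftStep]; ring
  · simp [driftStep, hx, abs_of_pos hx, Real.sign_of_pos hx]; ring

theorem integrable_driftStep_comp {Ω : Type*} [MeasurableSpace Ω] {μ : Measure Ω}
    [IsFiniteMeasure μ] {Z : Ω → ℝ} (hZm : Measurable Z) (hZint : Integrable Z μ) (s : ℝ)
    (ν : Measure Bool) [IsFiniteMeasure ν] :
    Integrable (fun p : Ω × Bool => driftStep s (Z p.1) p.2) (μ.prod ν) :=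
  Integrable.mono' (((integrable_const (|s| + 4)).add (hZint.abs.const_mul 4)).comp_fst ν)
    (measurable_from_prod_countable_left fun b =>
      (measurable_driftStep s b).comp hZm).aestronglyMeasurable
    (ae_of_all _ fun p => abs_driftStep_le s (Z p.1) p.2)

/-- Drift identity (equation (9.1)) at the heart of the attack on the AMS sketch
(Theorem 9.1): if `Z` is an integrable symmetric random variable on a probability space
`(Ω, μ)`, `B` is an independent fair coin (formally, we work on the product of `(Ω, μ)` with
the uniform measure on `{0,1}`, modeled as `Bool`), and
`W = s + 1 + 2Z` on the event `{Z > 0} ∪ ({Z = 0} ∩ {B = 1})` while `W = s + 4 + 4Z` on the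
complementary event `{Z < 0} ∪ ({Z = 0} ∩ {B = 0})`, then `E[W] = s + 5/2 - E[|Z|]`. -/
theorem stmt_17 {Ω : Type*} [MeasurableSpace Ω] (μ : Measure Ω) [IsProbabilityMeasure μ]
    (Z : Ω → ℝ) (hZm : Measurable Z) (hZint : Integrable Z μ)
    (hsym : Measure.map Z μ = Measure.map (fun ω => -Z ω) μ)
    (s : ℝ) (W : Ω × Bool → ℝ)
    (hW : ∀ ω b, W (ω, b) =
      if 0 < Z ω ∨ (Z ω = 0 ∧ b = true) then s + 1 + 2 * Z ω else s + 4 + 4 * Z ω) :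
    ∫ x, W x ∂(μ.prod (PMF.uniformOfFintype Bool).toMeasure) =
      s + 5 / 2 - ∫ ω, |Z ω| ∂μ := by
  obtain rfl : W = fun p => driftStep s (Z p.1) p.2 := funext fun p => hW p.1 p.2
  have hmean : ∫ ω, Z ω ∂μ = 0 :=
    integral_comp_eq_zero_of_map_eq_map_neg hZm hsym measurable_id fun _ => rfl
  have hsign : ∫ ω, Real.sign (Z ω) ∂μ = 0 :=
    integral_comp_eq_zero_of_map_eq_map_neg hZm hsym Real.measurable_sign fun _ => Real.sign_neg
  have hsign_int : Integrable (fun ω => Real.sign (Z ω)) μ :=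
    .of_bound (Real.measurable_sign.comp hZm).aestronglyMeasurable 1
      (ae_of_all _ fun ω => Real.abs_sign_le_one (Z ω))
  have hconst_sub_abs : Integrable (fun ω => s + 5 / 2 - |Z ω|) μ :=
    (integrable_const _).sub hZint.abs
  have hlin : Integrable (fun ω => s + 5 / 2 - |Z ω| + 3 * Z ω) μ :=
    hconst_sub_abs.add (hZint.const_mul 3)
  rw [integral_prod _ (integrable_driftStep_comp hZm hZint s _)]
  simp only [PMF.integral_uniformOfFintype_bool, driftStep_true_add_false_div_two]
  rw [integral_sub hlin (hsign_int.const_mul _),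
    integral_add hconst_sub_abs (hZint.const_mul 3), integral_sub (integrable_const _) hZint.abs,
    integral_const_mul, integral_const_mul, hmean, hsign]
  simp
end
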